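/- arXiv:2206.05336 — 7 statements merged into one kernel-verified Lean document; each statement's English description precedes it below -/
import Mathlib

section
/- There exists a constant c ∈ (0,1) such that for all nonnegative integers m₁, n₁, m₂, n₂ with m₁² + √2·n₁² < m₂² + √2·n₂², one has (m₂² + √2·n₂²) − (m₁² + √2·n₁²) > min(c/n₂², c/(√2·m₂²)), where the terms c/n₂² and c/(√2·m₂²) are interpreted as +∞ (or omitted from the minimum) when n₂ = 0 or m₂ = 0 respectively. -/
lemma int_ne (a b : ℤ) (h : ¬(a = 0 ∧ b = 0)) : a^2 - 2*b^2 ≠ 0 := by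
  intro heq
  have hb : b ≠ 0 := by
    rintro rfl
    simp at heq
    exact h ⟨heq, rfl⟩
  have ha2 : (a:ℝ)^2 = 2 * (b:ℝ)^2 := by
    have : (a:ℝ)^2 - 2*(b:ℝ)^2 = ((a^2 - 2*b^2 : ℤ) : ℝ) := by push_cast; ring
    rw [heq] at this; push_cast at this; linarith
  have hbR : (b:ℝ) ≠ 0 := Int.cast_ne_zero.mpr hb
  have hsq : ((a:ℝ)/(b:ℝ))^2 = 2 := by field_simp; linarith
  have : Real.sqrt 2 = |(a:ℝ)/(b:ℝ)| := by
    rw [← hsq, Real.sqrt_sq_eq_abs]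
  have hirr := irrational_sqrt_two
  rw [this] at hirr
  exact hirr ⟨|(a:ℚ)/(b:ℚ)|, by push_cast; simp⟩

lemma key (a b : ℤ) (h : ¬(a = 0 ∧ b = 0)) (hpos : 0 < (a:ℝ) + b * Real.sqrt 2) :
    1 ≤ ((a:ℝ) + b * Real.sqrt 2) * |(a:ℝ) - b * Real.sqrt 2| := by
  have hs : Real.sqrt 2 ^ 2 = 2 := Real.sq_sqrt (by norm_num)
  have h1 : ((a:ℝ) + b * Real.sqrt 2) * |(a:ℝ) - b * Real.sqrt 2|
      = |((a^2 - 2*b^2 : ℤ) : ℝ)| := by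
    rw [← abs_of_pos hpos, ← abs_mul]
    congr 1
    push_cast
    nlinarith [hs]
  rw [h1]
  have := int_ne a b h
  have : (1:ℤ) ≤ |a^2 - 2*b^2| := Int.one_le_abs this
  calc (1:ℝ) ≤ ((|a^2 - 2*b^2| : ℤ) : ℝ) := by exact_mod_cast this
    _ = |((a^2 - 2*b^2 : ℤ) : ℝ)| := by push_cast; ring_nf

set_option maxHeartbeats 1600000 in
theorem gap_sqrt_two_quadratic :
    ∃ c : ℝ, c ∈ Set.Ioo (0 : ℝ) 1 ∧ ∀ m₁ n₁ m₂ n₂ : ℕ,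
      ((m₁ : ℝ)^2 + Real.sqrt 2 * (n₁ : ℝ)^2 < (m₂ : ℝ)^2 + Real.sqrt 2 * (n₂ : ℝ)^2) →
      ((n₂ ≠ 0 ∧
          ((m₂ : ℝ)^2 + Real.sqrt 2 * (n₂ : ℝ)^2) - ((m₁ : ℝ)^2 + Real.sqrt 2 * (n₁ : ℝ)^2)
            > c / (n₂ : ℝ)^2) ∨
       (m₂ ≠ 0 ∧
          ((m₂ : ℝ)^2 + Real.sqrt 2 * (n₂ : ℝ)^2) - ((m₁ : ℝ)^2 + Real.sqrt 2 * (n₁ : ℝ)^2)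
            > c / (Real.sqrt 2 * (m₂ : ℝ)^2))) := by
  refine ⟨1/4, ⟨by norm_num, by norm_num⟩, ?_⟩
  intro m₁ n₁ m₂ n₂ hlt
  have hs2 : Real.sqrt 2 ^ 2 = 2 := Real.sq_sqrt (by norm_num)
  have hs0 : 0 ≤ Real.sqrt 2 := Real.sqrt_nonneg 2
  have hs1 : 1 < Real.sqrt 2 := by nlinarith
  have hs3 : Real.sqrt 2 < 3/2 := by nlinarith
  set s := Real.sqrt 2 with hs_def
  set a : ℤ := (m₂:ℤ)^2 - (m₁:ℤ)^2 with ha_def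
  set b : ℤ := (n₂:ℤ)^2 - (n₁:ℤ)^2 with hb_def
  have hcast : ((m₂:ℝ)^2 + s * (n₂:ℝ)^2) - ((m₁:ℝ)^2 + s * (n₁:ℝ)^2)
      = (a:ℝ) + b * s := by rw [ha_def, hb_def]; push_cast; ring
  have hD : 0 < (a:ℝ) + b * s := by rw [← hcast]; linarith
  have hnz : ¬(a = 0 ∧ b = 0) := by
    rintro ⟨h1, h2⟩
    rw [h1, h2] at hD; simp at hD
  have hk := key a b hnz hD
  rw [hcast]
  have ham : (a:ℝ) ≤ (m₂:ℝ)^2 := by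
    rw [ha_def]; push_cast; nlinarith [sq_nonneg ((m₁:ℝ))]
  have hbn : (b:ℝ) ≤ (n₂:ℝ)^2 := by
    rw [hb_def]; push_cast; nlinarith [sq_nonneg ((n₁:ℝ))]
  by_cases hb0 : 0 ≤ b
  · by_cases ha0 : 0 ≤ a
    · -- case 1: D ≥ 1
      have ha0' : (0:ℝ) ≤ (a:ℝ) := by exact_mod_cast ha0
      have hb0' : (0:ℝ) ≤ (b:ℝ) := by exact_mod_cast hb0
      have hD1 : 1 ≤ (a:ℝ) + b * s := by
        rcases eq_or_lt_of_le hb0 with hb | hb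
        · have ha1 : 1 ≤ a := by
            rcases eq_or_lt_of_le ha0 with ha | ha
            · exact absurd ⟨ha.symm, hb.symm⟩ hnz
            · exact ha
          have h1 : (1:ℝ) ≤ (a:ℝ) := by exact_mod_cast ha1
          nlinarith
        · have hb1 : (1:ℝ) ≤ (b:ℝ) := by exact_mod_cast hb
          nlinarith
      by_cases hn2 : n₂ = 0
      · right
        have hm2 : m₂ ≠ 0 := by
          intro hm2
          have h1 : a ≤ 0 := by
            rw [ha_def, hm2]; push_cast; nlinarith [sq_nonneg ((m₁:ℤ))]
          have h2 : b ≤ 0 := by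
            rw [hb_def, hn2]; push_cast; nlinarith [sq_nonneg ((n₁:ℤ))]
          have h1' : (a:ℝ) ≤ 0 := by exact_mod_cast h1
          have h2' : (b:ℝ) ≤ 0 := by exact_mod_cast h2
          nlinarith
        refine ⟨hm2, ?_⟩
        have hm2' : (1:ℝ) ≤ (m₂:ℝ) := by exact_mod_cast Nat.one_le_iff_ne_zero.mpr hm2
        rw [gt_iff_lt, div_lt_iff₀ (by nlinarith)]
        have h3 : (1:ℝ) ≤ s * (m₂:ℝ)^2 := by nlinarith
        nlinarith [mul_le_mul hD1 h3 (by norm_num : (0:ℝ) ≤ 1) (by linarith : (0:ℝ) ≤ (a:ℝ) + b * s)]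
      · left
        have hn2' : (1:ℝ) ≤ (n₂:ℝ) := by exact_mod_cast Nat.one_le_iff_ne_zero.mpr hn2
        refine ⟨hn2, ?_⟩
        rw [gt_iff_lt, div_lt_iff₀ (by nlinarith)]
        nlinarith
    · -- case 2: a < 0, b ≥ 1
      push_neg at ha0
      have ha1 : (a:ℝ) ≤ -1 := by exact_mod_cast (by omega : a ≤ -1)
      have hb1 : (1:ℝ) ≤ (b:ℝ) := by
        have : 1 ≤ b := by
          rcases eq_or_lt_of_le hb0 with hb | hb
          · exfalso
            have : (b:ℝ) = 0 := by exact_mod_cast hb.symm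
            rw [this] at hD; simp at hD; linarith
          · exact hb
        exact_mod_cast this
      left
      have hn2 : n₂ ≠ 0 := by
        intro hn2
        have h2 : b ≤ 0 := by
          rw [hb_def, hn2]; push_cast; nlinarith [sq_nonneg ((n₁:ℤ))]
        have h2' : (b:ℝ) ≤ 0 := by exact_mod_cast h2
        linarith
      refine ⟨hn2, ?_⟩
      have hn2' : (1:ℝ) ≤ (n₂:ℝ) := by exact_mod_cast Nat.one_le_iff_ne_zero.mpr hn2
      have habs : |(a:ℝ) - b * s| = b * s - (a:ℝ) := by
        rw [abs_of_neg (by nlinarith)]; ring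
      rw [habs] at hk
      -- b*s - a < 2*s*n₂², since -a < b*s ≤ s*n₂²
      have h1 : (b:ℝ) * s - (a:ℝ) < 2 * s * (n₂:ℝ)^2 := by nlinarith
      have h2 : (1:ℝ) < ((a:ℝ) + b * s) * (2 * s * (n₂:ℝ)^2) := by nlinarith
      rw [gt_iff_lt, div_lt_iff₀ (by nlinarith)]
      nlinarith
  · -- case 3: b < 0, so a ≥ 1
    push_neg at hb0
    have hb1 : (b:ℝ) ≤ -1 := by exact_mod_cast (by omega : b ≤ -1)
    have ha1 : (1:ℝ) ≤ (a:ℝ) := by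
      have : 1 ≤ a := by
        by_contra h
        push_neg at h
        have : (a:ℝ) ≤ 0 := by exact_mod_cast (by omega : a ≤ 0)
        nlinarith
      exact_mod_cast this
    right
    have hm2 : m₂ ≠ 0 := by
      intro hm2
      have h1 : a ≤ 0 := by
        rw [ha_def, hm2]; push_cast; nlinarith [sq_nonneg ((m₁:ℤ))]
      have h1' : (a:ℝ) ≤ 0 := by exact_mod_cast h1
      linarith
    refine ⟨hm2, ?_⟩
    have hm2' : (1:ℝ) ≤ (m₂:ℝ) := by exact_mod_cast Nat.one_le_iff_ne_zero.mpr hm2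
    have habs : |(a:ℝ) - b * s| = (a:ℝ) - b * s := abs_of_pos (by nlinarith)
    rw [habs] at hk
    have h1 : (a:ℝ) - b * s < 2 * (m₂:ℝ)^2 := by nlinarith
    have h2 : (1:ℝ) < ((a:ℝ) + b * s) * (2 * (m₂:ℝ)^2) := by nlinarith
    rw [gt_iff_lt, div_lt_iff₀ (by nlinarith)]
    nlinarith
end

section
/- Let c > 0 be such that |q√2 − p| > c/q for all positive integers q and integers p. Then for all nonnegative integers m₁, n₁, m₂, n₂ with m₁² + √2·n₁² < m₂² + √2·n₂², one has (m₂² + √2·n₂²) − (m₁² + √2·n₁²) > min(c,1)/(√2·(m₂² + √2·n₂²)). -/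
set_option maxHeartbeats 1000000


theorem gap_sqrt_two_quadratic_corollary (c : ℝ) (hc : 0 < c)
    (hliou : ∀ q : ℕ, 0 < q → ∀ p : ℤ, |(q : ℝ) * Real.sqrt 2 - (p : ℝ)| > c / (q : ℝ)) :
    ∀ m₁ n₁ m₂ n₂ : ℕ,
      ((m₁ : ℝ)^2 + Real.sqrt 2 * (n₁ : ℝ)^2 < (m₂ : ℝ)^2 + Real.sqrt 2 * (n₂ : ℝ)^2) →
      ((m₂ : ℝ)^2 + Real.sqrt 2 * (n₂ : ℝ)^2) - ((m₁ : ℝ)^2 + Real.sqrt 2 * (n₁ : ℝ)^2)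
        > min c 1 / (Real.sqrt 2 * ((m₂ : ℝ)^2 + Real.sqrt 2 * (n₂ : ℝ)^2)) := by
  intro m₁ n₁ m₂ n₂ h
  set s : ℝ := Real.sqrt 2 with hs
  have hs2 : s * s = 2 := Real.mul_self_sqrt (by norm_num)
  have hspos : 0 < s := Real.sqrt_pos.mpr (by norm_num)
  have hs1 : 1 < s := by nlinarith
  have hS1 : (0:ℝ) ≤ (m₁:ℝ)^2 + s * (n₁:ℝ)^2 := by positivity
  have hSpos : (0:ℝ) < (m₂:ℝ)^2 + s * (n₂:ℝ)^2 := lt_of_le_of_lt hS1 h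
  have hmin : 0 < min c 1 := lt_min hc one_pos
  set b : ℤ := (n₂:ℤ)^2 - (n₁:ℤ)^2 with hb
  have hbcast : ((b:ℤ):ℝ) = (n₂:ℝ)^2 - (n₁:ℝ)^2 := by rw [hb]; push_cast; ring
  have hbs : s * ((b:ℤ):ℝ) = s * ((n₂:ℝ)^2 - (n₁:ℝ)^2) := by rw [hbcast]
  rcases lt_trichotomy b 0 with hb0 | hb0 | hb0
  · -- b < 0
    have hq : ((((-b).toNat : ℕ)):ℝ) = -(b:ℝ) := by
      have := Int.toNat_of_nonneg (by omega : (0:ℤ) ≤ -b)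
      exact_mod_cast congrArg (Int.cast : ℤ → ℝ) this
    have hqpos : 0 < (-b).toNat := by omega
    have key := hliou (-b).toNat hqpos ((m₂:ℤ)^2 - (m₁:ℤ)^2)
    rw [hq] at key
    have hpcast : (((((m₂:ℤ)^2 - (m₁:ℤ)^2):ℤ)):ℝ) = (m₂:ℝ)^2 - (m₁:ℝ)^2 := by
      push_cast; ring
    rw [hpcast] at key
    have hbR : (b:ℝ) < 0 := by exact_mod_cast hb0
    -- D = (m₂²-m₁²) + s*(n₂²-n₁²) = -((-b)*s - p)
    have habs : -(b:ℝ) * s - ((m₂:ℝ)^2 - (m₁:ℝ)^2) < 0 := by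
      nlinarith [h, hbcast]
    rw [abs_of_neg habs] at key
    -- key : D > c / (-b)
    have hble : -(b:ℝ) ≤ (n₁:ℝ)^2 := by
      rw [hbcast] at *
      nlinarith [sq_nonneg (n₂:ℝ)]
    have hbS : -(b:ℝ) ≤ s * ((m₂:ℝ)^2 + s * (n₂:ℝ)^2) := by
      nlinarith [sq_nonneg (m₁:ℝ), h]
    have hnb : (0:ℝ) < -(b:ℝ) := by linarith
    calc min c 1 / (s * ((m₂:ℝ)^2 + s * (n₂:ℝ)^2))
        ≤ c / (-(b:ℝ)) := by
          apply div_le_div₀ (le_of_lt hc) (min_le_left _ _) hnb hbS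
      _ < _ := by linarith [key, hbs]
  · -- b = 0
    have hn : (n₂:ℝ)^2 = (n₁:ℝ)^2 := by
      have : ((b:ℤ):ℝ) = 0 := by rw [hb0]; simp
      rw [hbcast] at this; linarith
    have hD : (m₁:ℝ)^2 < (m₂:ℝ)^2 := by nlinarith
    have hmZ : (m₁:ℤ)^2 < (m₂:ℤ)^2 := by exact_mod_cast hD
    have hD1 : (1:ℝ) ≤ (m₂:ℝ)^2 - (m₁:ℝ)^2 := by
      have : (m₁:ℤ)^2 + 1 ≤ (m₂:ℤ)^2 := by omega
      have h2 : ((m₁:ℝ)^2 + 1 ≤ (m₂:ℝ)^2) := by exact_mod_cast this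
      linarith
    have hm2 : 1 ≤ m₂ ∨ 1 ≤ n₂ := by
      by_contra hcon
      push_neg at hcon
      obtain ⟨h1, h2⟩ := hcon
      have hm0 : m₂ = 0 := by omega
      have hn0 : n₂ = 0 := by omega
      subst hm0; subst hn0
      norm_num at hSpos
    have hSge : (1:ℝ) ≤ (m₂:ℝ)^2 + s * (n₂:ℝ)^2 := by
      rcases hm2 with hm | hn2
      · have : (1:ℝ) ≤ (m₂:ℝ) := by exact_mod_cast hm
        nlinarith [sq_nonneg (n₂:ℝ)]
      · have : (1:ℝ) ≤ (n₂:ℝ) := by exact_mod_cast hn2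
        nlinarith [sq_nonneg (m₂:ℝ)]
    have hden : (1:ℝ) < s * ((m₂:ℝ)^2 + s * (n₂:ℝ)^2) := by nlinarith
    have : min c 1 / (s * ((m₂:ℝ)^2 + s * (n₂:ℝ)^2)) < 1 := by
      rw [div_lt_one (by linarith)]
      calc min c 1 ≤ 1 := min_le_right _ _
        _ < _ := hden
    have hsn : s * (n₂:ℝ)^2 = s * (n₁:ℝ)^2 := by rw [hn]
    linarith
  · -- b > 0
    have hq : (((b.toNat : ℕ)):ℝ) = (b:ℝ) := by
      have := Int.toNat_of_nonneg (le_of_lt hb0)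
      exact_mod_cast congrArg (Int.cast : ℤ → ℝ) this
    have hqpos : 0 < b.toNat := by omega
    have key := hliou b.toNat hqpos ((m₁:ℤ)^2 - (m₂:ℤ)^2)
    rw [hq] at key
    have hpcast : (((((m₁:ℤ)^2 - (m₂:ℤ)^2):ℤ)):ℝ) = (m₁:ℝ)^2 - (m₂:ℝ)^2 := by
      push_cast; ring
    rw [hpcast] at key
    have hbR : (0:ℝ) < (b:ℝ) := by exact_mod_cast hb0
    have hbR1 : (1:ℝ) ≤ (b:ℝ) := by exact_mod_cast hb0
    have habs : (0:ℝ) < (b:ℝ) * s - ((m₁:ℝ)^2 - (m₂:ℝ)^2) := by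
      nlinarith [h, hbcast]
    rw [abs_of_pos habs] at key
    have hble : (b:ℝ) ≤ (n₂:ℝ)^2 := by
      rw [hbcast] at *
      nlinarith [sq_nonneg (n₁:ℝ)]
    have hbS : (b:ℝ) ≤ s * ((m₂:ℝ)^2 + s * (n₂:ℝ)^2) := by
      nlinarith [sq_nonneg (m₂:ℝ)]
    calc min c 1 / (s * ((m₂:ℝ)^2 + s * (n₂:ℝ)^2))
        ≤ c / ((b:ℝ)) := by
          apply div_le_div₀ (le_of_lt hc) (min_le_left _ _) hbR hbS
      _ < _ := by linarith [key, hbs]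
end

section
/- Let 0 < μ₁ < μ₂ < ⋯ < μ_N be distinct positive reals. For each n ≤ N, the minimal L²[0,∞)-norm function φ_n satisfying ∫₀^∞ e^{-μ_k t} φ_n(t) dt = δ_{kn} for k = 1,…,N has norm ‖φ_n‖_{L²[0,∞)} = √(2μ_n) · ∏_{j≤N, j≠n} (1 + μ_n/μ_j) / |∏_{j≤N, j≠n} (1 − μ_n/μ_j)|. -/
open MeasureTheory Finset

open Polynomial RealInnerProductSpace


noncomputable def ccoef {N : ℕ} (μ : Fin N → ℝ) (n j : Fin N) : ℝ :=
  ((∏ i ∈ univ.erase n, (-μ j - μ i)) * ∏ i, (μ n + μ i)) /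
    ((∏ i ∈ univ.erase j, (μ i - μ j)) * ∏ i ∈ univ.erase n, (μ n - μ i))

lemma lagrange_step {N : ℕ} (μ : Fin N → ℝ) (hinj : Function.Injective μ)
    (n k : Fin N) :
    ∏ i ∈ univ.erase n, (μ k - μ i)
      = ∑ j, (∏ i ∈ univ.erase n, (-μ j - μ i)) *
          ∏ i ∈ univ.erase j, ((μ i - μ j)⁻¹ * (μ k + μ i)) := by
  set v : Fin N → ℝ := fun i => -μ i with hv
  have hvinj : Set.InjOn v (univ : Finset (Fin N)) := fun a _ b _ h => hinj (neg_injective h)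
  set f : ℝ[X] := ∏ i ∈ univ.erase n, (X - C (μ i)) with hf
  have hdeg : f.degree < (univ : Finset (Fin N)).card := by
    have h1 : f.degree = ((univ.erase n).card : WithBot ℕ) := by
      rw [hf, degree_prod]
      simp [degree_X_sub_C]
    rw [h1, card_erase_of_mem (mem_univ n), card_univ, Fintype.card_fin]
    exact_mod_cast Nat.sub_lt (Nat.pos_of_ne_zero (by rintro rfl; exact absurd n.2 (by simp))) one_pos
  have hL := Lagrange.eq_interpolate hvinj hdeg
  have := congrArg (Polynomial.eval (μ k)) hL
  rw [Lagrange.interpolate_apply] at this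
  rw [hf] at this
  simp only [eval_prod, eval_sub, eval_X, eval_C, eval_finset_sum, eval_mul] at this
  rw [this]
  refine Finset.sum_congr rfl fun j _ => ?_
  rw [Lagrange.basis]
  simp only [eval_prod, Lagrange.basisDivisor, eval_mul, eval_sub, eval_X, eval_C]
  congr 1
  exact Finset.prod_congr rfl fun i _ => by simp [v, sub_neg_eq_add]; exact Or.inl (by ring)

lemma key_identity {N : ℕ} (μ : Fin N → ℝ) (hpos : ∀ i, 0 < μ i) (hinj : Function.Injective μ)
    (n k : Fin N) :
    ∑ j, ccoef μ n j * (μ k + μ j)⁻¹ = if k = n then 1 else 0 := by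
  have hsum : ∀ a b : Fin N, 0 < μ a + μ b := fun a b => add_pos (hpos a) (hpos b)
  have hDn : (∏ i ∈ univ.erase n, (μ n - μ i)) ≠ 0 :=
    Finset.prod_ne_zero_iff.mpr fun i hi => sub_ne_zero.mpr fun h => (Finset.mem_erase.mp hi).1 (hinj h.symm)
  have hPk : (0:ℝ) < ∏ i, (μ k + μ i) := Finset.prod_pos fun i _ => hsum k i
  have hPn : (0:ℝ) < ∏ i, (μ n + μ i) := Finset.prod_pos fun i _ => hsum n i
  have hterm : ∀ j : Fin N, ccoef μ n j * (μ k + μ j)⁻¹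
      = ((∏ i, (μ n + μ i)) / ((∏ i ∈ univ.erase n, (μ n - μ i)) * ∏ i, (μ k + μ i))) *
        ((∏ i ∈ univ.erase n, (-μ j - μ i)) * ∏ i ∈ univ.erase j, ((μ i - μ j)⁻¹ * (μ k + μ i))) := by
    intro j
    have hDj : (∏ i ∈ univ.erase j, (μ i - μ j)) ≠ 0 :=
      Finset.prod_ne_zero_iff.mpr fun i hi => sub_ne_zero.mpr fun h => (Finset.mem_erase.mp hi).1 (hinj h)
    have h1 : ∏ i ∈ univ.erase j, ((μ i - μ j)⁻¹ * (μ k + μ i))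
        = (∏ i ∈ univ.erase j, (μ i - μ j))⁻¹ * ((∏ i, (μ k + μ i)) * (μ k + μ j)⁻¹) := by
      rw [Finset.prod_mul_distrib, ← Finset.prod_inv_distrib]
      congr 1
      rw [← Finset.mul_prod_erase univ _ (Finset.mem_univ j)]
      field_simp [(hsum k j).ne']
    rw [h1, ccoef]
    have h2 := (hsum k j).ne'
    field_simp
  rw [Finset.sum_congr rfl fun j _ => hterm j, ← Finset.mul_sum, ← lagrange_step μ hinj n k]
  by_cases hk : k = n
  · subst hk
    rw [if_pos rfl]
    field_simp
  · rw [if_neg hk]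
    have hz : ∏ i ∈ univ.erase n, (μ k - μ i) = 0 :=
      Finset.prod_eq_zero (Finset.mem_erase.mpr ⟨hk, Finset.mem_univ k⟩) (sub_self (μ k))
    rw [hz, mul_zero]

lemma sqrt_ccoef {N : ℕ} (μ : Fin N → ℝ) (hpos : ∀ i, 0 < μ i) (hinj : Function.Injective μ)
    (n : Fin N) :
    Real.sqrt (ccoef μ n n) = Real.sqrt (2 * μ n) *
      (∏ j ∈ univ.erase n, (1 + μ n / μ j)) / |∏ j ∈ univ.erase n, (1 - μ n / μ j)| := by
  set A := ∏ i ∈ univ.erase n, (μ n + μ i) with hA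
  set D := ∏ i ∈ univ.erase n, (μ n - μ i) with hD
  have hApos : 0 < A := Finset.prod_pos fun i _ => add_pos (hpos n) (hpos i)
  have hPpos : 0 < ∏ i ∈ univ.erase n, μ i := Finset.prod_pos fun i _ => hpos i
  have hDne : D ≠ 0 := Finset.prod_ne_zero_iff.mpr fun i hi =>
    sub_ne_zero.mpr fun h => (Finset.mem_erase.mp hi).1 (hinj h.symm)
  have hneg1 : ∏ i ∈ univ.erase n, (-μ n - μ i) = (-1:ℝ)^(univ.erase n).card * A := by
    calc ∏ i ∈ univ.erase n, (-μ n - μ i) = ∏ i ∈ univ.erase n, ((-1) * (μ n + μ i)) :=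
          Finset.prod_congr rfl fun i _ => by ring
      _ = (-1:ℝ)^(univ.erase n).card * A := by rw [Finset.prod_mul_distrib, Finset.prod_const]
  have hneg2 : ∏ i ∈ univ.erase n, (μ i - μ n) = (-1:ℝ)^(univ.erase n).card * D := by
    calc ∏ i ∈ univ.erase n, (μ i - μ n) = ∏ i ∈ univ.erase n, ((-1) * (μ n - μ i)) :=
          Finset.prod_congr rfl fun i _ => by ring
      _ = (-1:ℝ)^(univ.erase n).card * D := by rw [Finset.prod_mul_distrib, Finset.prod_const]
  have hm : ((-1:ℝ))^(univ.erase n).card ≠ 0 := pow_ne_zero _ (by norm_num)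
  have hccoef : ccoef μ n n = 2 * μ n * (A / D)^2 := by
    rw [ccoef, hneg1, hneg2,
      ← Finset.mul_prod_erase univ (fun i => μ n + μ i) (Finset.mem_univ n)]
    field_simp
    rw [← hA, ← hD, mul_div_assoc, div_self hDne, mul_one]
    ring
  have h2μ : (0:ℝ) ≤ 2 * μ n := by linarith [hpos n]
  rw [hccoef, Real.sqrt_mul h2μ, Real.sqrt_sq_eq_abs, abs_div, abs_of_pos hApos]
  have hR1 : ∏ j ∈ univ.erase n, (1 + μ n / μ j) = A / ∏ j ∈ univ.erase n, μ j := by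
    rw [eq_div_iff hPpos.ne', ← Finset.prod_mul_distrib]
    exact Finset.prod_congr rfl fun j hj => by field_simp [(hpos j).ne']; ring
  have hR2 : |∏ j ∈ univ.erase n, (1 - μ n / μ j)| = |D| / ∏ j ∈ univ.erase n, μ j := by
    have h3 : ∏ j ∈ univ.erase n, (1 - μ n / μ j)
        = (∏ j ∈ univ.erase n, (μ j - μ n)) / ∏ j ∈ univ.erase n, μ j := by
      rw [eq_div_iff hPpos.ne', ← Finset.prod_mul_distrib]
      exact Finset.prod_congr rfl fun j hj => by field_simp [(hpos j).ne']
    rw [h3, abs_div, abs_of_pos hPpos, hneg2, abs_mul, abs_pow, abs_neg, abs_one, one_pow, one_mul]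
  rw [hR1, hR2]
  have hDabs : |D| ≠ 0 := abs_ne_zero.mpr hDne
  field_simp



lemma memℒp_exp_neg_mul {b : ℝ} (hb : 0 < b) :
    MemLp (fun t => Real.exp (-b * t)) 2 (volume.restrict (Set.Ici (0:ℝ))) := by
  have hmeas : AEStronglyMeasurable (fun t => Real.exp (-b * t))
      (volume.restrict (Set.Ici (0:ℝ))) :=
    (Real.continuous_exp.comp (continuous_const.mul continuous_id)).aestronglyMeasurable
  rw [memLp_two_iff_integrable_sq hmeas]
  have h1 : IntegrableOn (fun t : ℝ => Real.exp (-(2*b) * t)) (Set.Ioi 0) :=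
    exp_neg_integrableOn_Ioi 0 (by linarith)
  have h2 : IntegrableOn (fun t : ℝ => Real.exp (-b * t) ^ 2) (Set.Ioi 0) := by
    refine h1.congr_fun (fun t _ => ?_) measurableSet_Ioi
    rw [sq, ← Real.exp_add]; ring_nf
  exact (integrableOn_Ici_iff_integrableOn_Ioi).mpr h2

lemma integral_exp_mul_exp {a b : ℝ} (hab : 0 < a + b) :
    ∫ t in Set.Ici (0:ℝ), Real.exp (-a * t) * Real.exp (-b * t) = (a + b)⁻¹ := by
  rw [MeasureTheory.integral_Ici_eq_integral_Ioi]
  have h1 : ∀ t : ℝ, Real.exp (-a*t) * Real.exp (-b*t) = Real.exp (-((a+b) * t)) := by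
    intro t; rw [← Real.exp_add]; ring_nf
  simp_rw [h1]
  have h2 := integral_comp_mul_left_Ioi (fun x => Real.exp (-x)) 0 hab
  simp only [mul_zero, smul_eq_mul] at h2
  rw [h2, integral_exp_neg_Ioi_zero, mul_one]


theorem minimal_norm_biorthogonal (N : ℕ) (μ : Fin N → ℝ)
    (hpos : ∀ k, 0 < μ k) (hmono : StrictMono μ) (n : Fin N) :
    ∃ φ : Lp ℝ 2 (volume.restrict (Set.Ici (0 : ℝ))),
      (∀ k : Fin N, ∫ t in Set.Ici (0 : ℝ), Real.exp (-(μ k) * t) * (φ : ℝ → ℝ) t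
        = if k = n then 1 else 0) ∧
      (∀ ψ : Lp ℝ 2 (volume.restrict (Set.Ici (0 : ℝ))),
        (∀ k : Fin N, ∫ t in Set.Ici (0 : ℝ), Real.exp (-(μ k) * t) * (ψ : ℝ → ℝ) t
          = if k = n then 1 else 0) → ‖φ‖ ≤ ‖ψ‖) ∧
      ‖φ‖ = Real.sqrt (2 * μ n) *
        (∏ j ∈ univ.erase n, (1 + μ n / μ j)) / |∏ j ∈ univ.erase n, (1 - μ n / μ j)| := by
  classical
  have hinj : Function.Injective μ := hmono.injective
  have hmem : ∀ k : Fin N, MemLp (fun t => Real.exp (-μ k * t)) 2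
      (volume.restrict (Set.Ici (0:ℝ))) := fun k => memℒp_exp_neg_mul (hpos k)
  set E : Fin N → Lp ℝ 2 (volume.restrict (Set.Ici (0:ℝ))) :=
    fun k => (hmem k).toLp _ with hE
  have hEcoe : ∀ k, (E k : ℝ → ℝ) =ᵐ[volume.restrict (Set.Ici (0:ℝ))]
      fun t => Real.exp (-μ k * t) := fun k => MemLp.coeFn_toLp _
  have hint : ∀ (k : Fin N) (ψ : Lp ℝ 2 (volume.restrict (Set.Ici (0:ℝ)))),
      ∫ t in Set.Ici (0:ℝ), Real.exp (-μ k * t) * (ψ : ℝ → ℝ) t = ⟪E k, ψ⟫ := by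
    intro k ψ
    rw [L2.inner_def]
    simp_rw [RCLike.inner_apply, conj_trivial]
    exact integral_congr_ae ((hEcoe k).mono fun t ht => by simp only [ht]; ring)
  have hEE : ∀ j k : Fin N, ⟪E j, E k⟫ = (μ j + μ k)⁻¹ := by
    intro j k
    rw [← hint j (E k)]
    calc ∫ t in Set.Ici (0:ℝ), Real.exp (-μ j * t) * (E k : ℝ → ℝ) t
        = ∫ t in Set.Ici (0:ℝ), Real.exp (-μ j * t) * Real.exp (-μ k * t) :=
          integral_congr_ae ((hEcoe k).mono fun t ht => by simp only [ht])
      _ = (μ j + μ k)⁻¹ := integral_exp_mul_exp (add_pos (hpos j) (hpos k))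
  set φ : Lp ℝ 2 (volume.restrict (Set.Ici (0:ℝ))) := ∑ j, ccoef μ n j • E j with hφdef
  have hφ : ∀ k : Fin N, ⟪E k, φ⟫ = if k = n then 1 else 0 := by
    intro k
    rw [hφdef, inner_sum]
    simp_rw [real_inner_smul_right, hEE]
    exact key_identity μ hpos hinj n k
  have hφinner : ∀ ζ : Lp ℝ 2 (volume.restrict (Set.Ici (0:ℝ))),
      ⟪φ, ζ⟫ = ∑ j, ccoef μ n j * ⟪E j, ζ⟫ := by
    intro ζ
    rw [hφdef, sum_inner]
    simp_rw [real_inner_smul_left]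
  have hnormsq : ‖φ‖^2 = ccoef μ n n := by
    rw [← real_inner_self_eq_norm_sq, hφinner φ]
    simp_rw [hφ]
    simp
  have hnorm : ‖φ‖ = Real.sqrt (ccoef μ n n) := by
    rw [← hnormsq, Real.sqrt_sq (norm_nonneg φ)]
  refine ⟨φ, fun k => (hint k φ).trans (hφ k), ?_, ?_⟩
  · intro ψ hψ
    have horth : ⟪φ, ψ - φ⟫ = (0:ℝ) := by
      rw [hφinner (ψ - φ)]
      refine Finset.sum_eq_zero fun j _ => ?_
      have h1 : ⟪E j, ψ⟫ = if j = n then (1:ℝ) else 0 := (hint j ψ).symm.trans (hψ j)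
      rw [inner_sub_right, h1, hφ j, sub_self, mul_zero]
    have hpyth : ‖ψ‖^2 = ‖φ‖^2 + ‖ψ - φ‖^2 := by
      calc ‖ψ‖^2 = ‖φ + (ψ - φ)‖^2 := by rw [show φ + (ψ - φ) = ψ from by abel]
        _ = ‖φ‖^2 + 2 * ⟪φ, ψ - φ⟫ + ‖ψ - φ‖^2 := norm_add_sq_real _ _
        _ = ‖φ‖^2 + ‖ψ - φ‖^2 := by rw [horth]; ring
    have hle : ‖φ‖^2 ≤ ‖ψ‖^2 := by nlinarith [sq_nonneg ‖ψ - φ‖]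
    calc ‖φ‖ = Real.sqrt (‖φ‖^2) := (Real.sqrt_sq (norm_nonneg _)).symm
      _ ≤ Real.sqrt (‖ψ‖^2) := Real.sqrt_le_sqrt hle
      _ = ‖ψ‖ := Real.sqrt_sq (norm_nonneg _)
  · rw [hnorm, sqrt_ccoef μ hpos hinj n]
end

section
/- Let μ_n = M·n for n ≥ 1 with M > 0 (linear growth), and fix n. Then as N → ∞, the quantity √(2μ_n) · ∏_{j≤N, j≠n}(1 + μ_n/μ_j) / |∏_{j≤N, j≠n}(1 − μ_n/μ_j)| tends to infinity. -/
open Finset Filter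

theorem finite_section_norms_diverge (M : ℝ) (hM : 0 < M) (n : ℕ) (hn : 1 ≤ n) :
    Tendsto (fun N : ℕ =>
      Real.sqrt (2 * (M * n)) *
        (∏ j ∈ (Finset.Icc 1 N).erase n, (1 + (M * n) / (M * j))) /
        |∏ j ∈ (Finset.Icc 1 N).erase n, (1 - (M * n) / (M * j))|)
      atTop atTop := by
  have hnpos : (0:ℝ) < n := by exact_mod_cast hn
  set c := Real.sqrt (2 * (M * n)) with hc
  have hcpos : 0 < c := Real.sqrt_pos.mpr (by positivity)
  set g : ℕ → ℝ := fun N => ∏ j ∈ (Finset.Icc 1 N).erase n, (((j:ℝ) + n) / |(j:ℝ) - n|)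
    with hg
  -- rewrite the function as c * g
  have key : ∀ N : ℕ,
      c * (∏ j ∈ (Finset.Icc 1 N).erase n, (1 + (M * n) / (M * j))) /
        |∏ j ∈ (Finset.Icc 1 N).erase n, (1 - (M * n) / (M * j))| = c * g N := by
    intro N
    rw [hg]
    rw [Finset.abs_prod, mul_div_assoc, ← Finset.prod_div_distrib]
    congr 1
    apply Finset.prod_congr rfl
    intro j hj
    have hj1 : 1 ≤ j := (Finset.mem_Icc.mp (Finset.mem_of_mem_erase hj)).1
    have hjn : j ≠ n := Finset.ne_of_mem_erase hj
    have hjpos : (0:ℝ) < j := by exact_mod_cast hj1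
    have hMj : M * j ≠ 0 := by positivity
    have h1 : (1 + (M * n) / (M * j)) = ((j:ℝ) + n) / j := by
      field_simp
    have h2 : (1 - (M * n) / (M * j)) = ((j:ℝ) - n) / j := by
      field_simp
    have habs0 : |(j:ℝ) - n| ≠ 0 := by
      have hjn' : (j:ℝ) ≠ n := by exact_mod_cast hjn
      exact abs_ne_zero.mpr (sub_ne_zero.mpr hjn')
    rw [h1, h2, abs_div, abs_of_pos hjpos]
    field_simp
  have gpos : ∀ N, 0 < g N := by
    intro N
    apply Finset.prod_pos
    intro j hj
    have hj1 : 1 ≤ j := (Finset.mem_Icc.mp (Finset.mem_of_mem_erase hj)).1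
    have hjn : j ≠ n := Finset.ne_of_mem_erase hj
    have hjn' : (j:ℝ) ≠ n := by exact_mod_cast hjn
    have hjpos : (0:ℝ) < j := by exact_mod_cast hj1
    apply div_pos (by linarith) (abs_pos.mpr (sub_ne_zero.mpr hjn'))
  -- recurrence: for N ≥ n, g (N+1) = ((N+1+n)/(N+1-n)) * g N
  have grec : ∀ N : ℕ, n ≤ N →
      g (N + 1) = (((N:ℝ) + 1 + n) / ((N:ℝ) + 1 - n)) * g N := by
    intro N hN
    have hNn : N + 1 ≠ n := by omega
    have hset : (Finset.Icc 1 (N + 1)).erase n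
        = insert (N + 1) ((Finset.Icc 1 N).erase n) := by
      rw [← Finset.insert_Icc_right_eq_Icc_add_one (by omega), Finset.erase_insert_of_ne hNn]
    simp only [hg]
    rw [hset, Finset.prod_insert (by simp)]
    have habs : |((N:ℝ) + 1) - n| = (N:ℝ) + 1 - n := by
      rw [abs_of_pos]
      have : (n:ℝ) ≤ N := by exact_mod_cast hN
      linarith
    push_cast
    rw [habs]
  -- linear lower bound
  set m := 2 * n + 1 with hm
  set a := g m / m with ha
  have hmpos : (0:ℝ) < m := by positivity
  have hapos : 0 < a := div_pos (gpos m) hmpos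
  have lower : ∀ k : ℕ, a * (m + k : ℕ) ≤ g (m + k) := by
    intro k
    induction k with
    | zero =>
        simp only [Nat.add_zero, ha]
        rw [div_mul_cancel₀]
        exact hmpos.ne'
    | succ k ih =>
        have hNk : n ≤ m + k := by omega
        have hrec := grec (m + k) hNk
        set N := m + k with hN
        have hNpos : (0:ℝ) < N := by positivity
        have hnN : (n:ℝ) ≤ N := by exact_mod_cast hNk
        have hden : (0:ℝ) < (N:ℝ) + 1 - n := by linarith
        have hratio : ((N:ℝ) + 1) / N ≤ ((N:ℝ) + 1 + n) / ((N:ℝ) + 1 - n) := by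
          rw [div_le_div_iff₀ hNpos hden]
          have h1 : (1:ℝ) ≤ n := by exact_mod_cast hn
          have h1N : (1:ℝ) ≤ N := by
            have : 1 ≤ m + k := by omega
            exact_mod_cast this
          nlinarith
        have : a * ((N:ℝ) + 1) = (((N:ℝ)+1)/N) * (a * N) := by
          field_simp
        have goal : a * ((N:ℝ) + 1) ≤ g (N + 1) := by
          rw [this, hrec]
          apply mul_le_mul hratio ih (by positivity)
          have := gpos (N+1)
          rw [hrec] at this
          positivity
        show a * ((m + (k+1) : ℕ):ℝ) ≤ g (m + (k+1))
        rw [show m + (k+1) = N + 1 from by omega]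
        have hcast : ((N + 1 : ℕ) : ℝ) = (N:ℝ) + 1 := by push_cast; ring
        rw [hcast]; exact goal
  -- conclude
  have comp : ∀ᶠ N in atTop, c * a * N ≤ c * (∏ j ∈ (Finset.Icc 1 N).erase n, (1 + (M * n) / (M * j))) /
        |∏ j ∈ (Finset.Icc 1 N).erase n, (1 - (M * n) / (M * j))| := by
    filter_upwards [eventually_ge_atTop m] with N hN
    rw [key N]
    obtain ⟨k, rfl⟩ := Nat.exists_eq_add_of_le hN
    have := lower k
    have : a * ((m + k : ℕ):ℝ) ≤ g (m + k) := this
    calc c * a * ((m+k:ℕ):ℝ) = c * (a * ((m+k:ℕ):ℝ)) := by ring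
      _ ≤ c * g (m + k) := by
          apply mul_le_mul_of_nonneg_left this hcpos.le
  refine tendsto_atTop_mono' _ comp ?_
  have h1 : Tendsto (fun N : ℕ => (N:ℝ)) atTop atTop := tendsto_natCast_atTop_atTop
  exact h1.const_mul_atTop (by positivity)
end

section
/- Let (μ_n) be positive reals, β > 1, M, K₀, K₂ > 0 constants, and suppose the bi-orthogonal functions satisfy ‖φ_n‖_{L²[0,T]} ≤ √(μ_n/2)·κ·exp(K₀ M^{-1/β} μ_n^{1/β}(log μ_n + K₂)) for some κ > 0. If moments m_n = e^{-μ_n τ}·f_n/c_n with τ > 0, |c_n| ≥ C e^{-p n^α} (C > 0, p ≥ 0, 0 ≤ α < β), μ_n = M n^β(1 + o(1)), and ∑|f_n|² < ∞, then ∑_n |m_n|·‖φ_n‖_{L²[0,T]} < ∞. -/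
open MeasureTheory Filter Asymptotics Real

/-!
Dividing by `|c n| ≥ C e^{-p n^α}` and inserting the bound on `‖φ n‖`, the `n`-th term is at most
`|f n| (κ / C) exp (-τ μ n + log (μ n) + A (μ n)^{1/β} (log (μ n) + K₂) + p n^α)` with
`A = K₀ M^{-1/β}`. Since `β > 1`, every summand of the exponent except `-τ μ n` is `o(μ n)`
(using `μ n ≍ n^β` for the last one), and so is `n`; hence the exponent is eventually `≤ -n`.
A square-summable sequence is bounded, so the series is dominated by a geometric one.
-/

lemma isLittleO_rpow_mul_atTop {a b : ℝ} {g : ℝ → ℝ} (hg : g =o[atTop] fun x => x ^ (b - a)) :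
    (fun x => x ^ a * g x) =o[atTop] fun x => x ^ b := by
  refine ((isBigO_refl (fun x : ℝ => x ^ a) atTop).mul_isLittleO hg).congr' .rfl ?_
  filter_upwards [eventually_gt_atTop 0] with x hx
  rw [← rpow_add hx, add_sub_cancel]

lemma isLittleO_rpow_rpow_atTop {a b : ℝ} (hab : a < b) :
    (fun x : ℝ => x ^ a) =o[atTop] fun x => x ^ b := by
  have h1 : (fun _ : ℝ => (1 : ℝ)) =o[atTop] fun x => x ^ (b - a) :=
    (isLittleO_one_left_iff ℝ).2 <|
      tendsto_norm_atTop_atTop.comp (tendsto_rpow_atTop (sub_pos.2 hab))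
  simpa using isLittleO_rpow_mul_atTop h1

lemma isLittleO_rpow_mul_log_add_const_atTop {a : ℝ} (ha : a < 1) (K : ℝ) :
    (fun x : ℝ => x ^ a * (log x + K)) =o[atTop] id := by
  have hK : (fun x : ℝ => log x + K) =o[atTop] fun x => x ^ (1 - a) :=
    (isLittleO_log_rpow_atTop (sub_pos.2 ha)).add <| by
      simpa using (isLittleO_rpow_rpow_atTop (sub_pos.2 ha)).const_mul_left K
  have h := isLittleO_rpow_mul_atTop (b := 1) hK
  simp only [rpow_one] at h
  exact h

lemma eventually_sqrt_mul_exp_le_exp_neg {μ : ℕ → ℝ} {α β τ : ℝ} (hβ : 1 < β) (hαβ : α < β)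
    (hτ : 0 < τ) (hμ : Tendsto μ atTop atTop) (hβμ : (fun n : ℕ => (n : ℝ) ^ β) =O[atTop] μ)
    (A K p : ℝ) :
    ∀ᶠ n : ℕ in atTop, √(μ n / 2) * exp (A * μ n ^ (1 / β) * (log (μ n) + K)) *
      exp (p * (n : ℝ) ^ α + -μ n * τ) ≤ exp (-n) := by
  have hexp : (fun x : ℝ => log x + A * x ^ (1 / β) * (log x + K)) =o[atTop] id := by
    have hβ' : 1 / β < 1 := (div_lt_one (by linarith)).2 hβ
    simpa only [mul_assoc] using
      isLittleO_log_id_atTop.add ((isLittleO_rpow_mul_log_add_const_atTop hβ' K).const_mul_left A)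
  have hpoly : (fun n : ℕ => p * (n : ℝ) ^ α + n) =o[atTop] fun n : ℕ => (n : ℝ) ^ β := by
    have hlin : (fun x : ℝ => x) =o[atTop] fun x => x ^ β := by
      simpa using isLittleO_rpow_rpow_atTop hβ
    exact (((isLittleO_rpow_rpow_atTop hαβ).const_mul_left p).add hlin).comp_tendsto
      tendsto_natCast_atTop_atTop
  have hR : (fun n : ℕ => log (μ n) + A * μ n ^ (1 / β) * (log (μ n) + K) +
      (p * (n : ℝ) ^ α + n)) =o[atTop] μ :=
    (hexp.comp_tendsto hμ).add (hpoly.trans_isBigO hβμ)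
  filter_upwards [hR.bound hτ, hμ.eventually_ge_atTop 1] with n hRn hμn
  rw [Real.norm_eq_abs, Real.norm_eq_abs, abs_of_pos (show 0 < μ n by linarith)] at hRn
  have hsqrt : √(μ n / 2) ≤ exp (log (μ n)) := by
    rw [exp_log (by linarith), sqrt_le_left (by linarith)]
    nlinarith
  calc _ ≤ exp (log (μ n)) * exp (A * μ n ^ (1 / β) * (log (μ n) + K)) *
        exp (p * (n : ℝ) ^ α + -μ n * τ) := by gcongr
    _ = exp (log (μ n) + A * μ n ^ (1 / β) * (log (μ n) + K) + (p * (n : ℝ) ^ α + n)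
        - τ * μ n - n) := by rw [← exp_add, ← exp_add]; ring_nf
    _ ≤ exp (-n) := exp_le_exp.2 (by linarith [le_abs_self (log (μ n) +
        A * μ n ^ (1 / β) * (log (μ n) + K) + (p * (n : ℝ) ^ α + n))])

lemma abs_exp_mul_div_mul_le {t f c x B C q : ℝ} (hC : 0 < C) (hc : C * exp (-q) ≤ |c|)
    (hx : 0 ≤ x) (hxB : x ≤ B) : |exp t * f / c| * x ≤ |f| * (B * exp (q + t) / C) := by
  rw [abs_div, abs_mul, abs_of_pos (exp_pos t)]
  calc exp t * |f| / |c| * x = exp t * |f| * x / |c| := by ring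
    _ ≤ exp t * |f| * B / (C * exp (-q)) := by
        have : 0 ≤ B := hx.trans hxB
        gcongr
    _ = |f| * (B * exp (q + t) / C) := by
        rw [exp_add, exp_neg]
        field_simp

theorem absolute_convergence_of_moment_series_general
    (T : ℝ)
    (μ : ℕ → ℝ) (M β : ℝ) (hM : 0 < M) (hβ : 1 < β)
    (hasymp : Tendsto (fun n : ℕ => μ n / (M * (n : ℝ) ^ β)) atTop (nhds 1))
    (K₀ K₂ κ : ℝ) (hκ : 0 < κ)
    (φ : ℕ → Lp ℝ 2 (volume.restrict (Set.Icc (0 : ℝ) T)))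
    (hnorm : ∀ n : ℕ, 1 ≤ n → ‖φ n‖ ≤ Real.sqrt (μ n / 2) * κ *
      Real.exp (K₀ * M ^ (-(1 / β)) * (μ n) ^ (1 / β) * (Real.log (μ n) + K₂)))
    (τ : ℝ) (hτ : 0 < τ)
    (f c m : ℕ → ℝ) (C p α : ℝ) (hC : 0 < C) (hαβ : α < β)
    (hc : ∀ n : ℕ, 1 ≤ n → C * Real.exp (-p * (n : ℝ) ^ α) ≤ |c n|)
    (hm : ∀ n : ℕ, 1 ≤ n → m n = Real.exp (-(μ n) * τ) * f n / c n)
    (hf : Summable fun n : ℕ => |f (n + 1)| ^ 2) :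
    Summable fun n : ℕ => |m (n + 1)| * ‖φ (n + 1)‖ := by
  have hμ : μ ~[atTop] fun n : ℕ => M * (n : ℝ) ^ β := isEquivalent_of_tendsto_one hasymp
  have hμtop : Tendsto μ atTop atTop := hμ.symm.tendsto_atTop <|
    ((tendsto_rpow_atTop (by linarith)).comp tendsto_natCast_atTop_atTop).const_mul_atTop hM
  have hβμ : (fun n : ℕ => (n : ℝ) ^ β) =O[atTop] μ :=
    (isBigO_self_const_mul hM.ne' _ _).trans hμ.symm.isBigO
  have hweight := (tendsto_add_atTop_nat 1).eventually <|
    eventually_sqrt_mul_exp_le_exp_neg hβ hαβ hτ hμtop hβμ (K₀ * M ^ (-(1 / β))) K₂ p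
  have hf_le_one : ∀ᶠ n in atTop, |f (n + 1)| ≤ 1 := by
    filter_upwards [hf.tendsto_atTop_zero.eventually (ge_mem_nhds one_pos)] with n hn
    simpa using (sq_le_one_iff_abs_le_one |f (n + 1)|).1 hn
  refine (summable_exp_neg_nat.mul_left (κ / C)).of_norm_bounded_eventually_nat ?_
  filter_upwards [hweight, hf_le_one] with n hw hfn
  have hn : 1 ≤ n + 1 := Nat.le_add_left 1 n
  calc ‖|m (n + 1)| * ‖φ (n + 1)‖‖ = |m (n + 1)| * ‖φ (n + 1)‖ := by
        rw [Real.norm_eq_abs, abs_of_nonneg (by positivity)]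
    _ ≤ |f (n + 1)| * (√(μ (n + 1) / 2) * κ * exp (K₀ * M ^ (-(1 / β)) * μ (n + 1) ^ (1 / β) *
          (log (μ (n + 1)) + K₂)) * exp (p * ((n + 1 : ℕ) : ℝ) ^ α + -μ (n + 1) * τ) / C) := by
        rw [hm _ hn]
        exact abs_exp_mul_div_mul_le hC (by simpa only [neg_mul] using hc _ hn) (norm_nonneg _)
          (hnorm _ hn)
    _ = |f (n + 1)| * (κ / C * (√(μ (n + 1) / 2) * exp (K₀ * M ^ (-(1 / β)) *
          μ (n + 1) ^ (1 / β) * (log (μ (n + 1)) + K₂)) *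
          exp (p * ((n + 1 : ℕ) : ℝ) ^ α + -μ (n + 1) * τ))) := by ring
    _ ≤ 1 * (κ / C * exp (-((n + 1 : ℕ) : ℝ))) := by gcongr
    _ ≤ κ / C * exp (-n) := by
        rw [one_mul]
        gcongr
        simp

theorem absolute_convergence_of_moment_series
    (T : ℝ) (hT : 0 < T)
    (μ : ℕ → ℝ) (M β : ℝ) (hM : 0 < M) (hβ : 1 < β)
    (hpos : ∀ n : ℕ, 1 ≤ n → 0 < μ n)
    (hasymp : Tendsto (fun n : ℕ => μ n / (M * (n : ℝ) ^ β)) atTop (nhds 1))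
    (K₀ K₂ κ : ℝ) (hK₀ : 0 < K₀) (hK₂ : 0 < K₂) (hκ : 0 < κ)
    (φ : ℕ → Lp ℝ 2 (volume.restrict (Set.Icc (0 : ℝ) T)))
    (hnorm : ∀ n : ℕ, 1 ≤ n → ‖φ n‖ ≤ Real.sqrt (μ n / 2) * κ *
      Real.exp (K₀ * M ^ (-(1 / β)) * (μ n) ^ (1 / β) * (Real.log (μ n) + K₂)))
    (τ : ℝ) (hτ : 0 < τ)
    (f c m : ℕ → ℝ) (C p α : ℝ) (hC : 0 < C) (hp : 0 ≤ p) (hα : 0 ≤ α) (hαβ : α < β)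
    (hc : ∀ n : ℕ, 1 ≤ n → C * Real.exp (-p * (n : ℝ) ^ α) ≤ |c n|)
    (hm : ∀ n : ℕ, 1 ≤ n → m n = Real.exp (-(μ n) * τ) * f n / c n)
    (hf : Summable fun n : ℕ => |f (n + 1)| ^ 2) :
    Summable fun n : ℕ => |m (n + 1)| * ‖φ (n + 1)‖ :=
  absolute_convergence_of_moment_series_general T μ M β hM hβ hasymp K₀ K₂ κ hκ φ hnorm τ hτ f c m C
    p α hC hαβ hc hm hf
end

section
/- Let (μ_n) be a strictly increasing sequence of positive reals with counting function N(x) = #{n : μ_n ≤ x}. If 0 ≤ M^{-1/β} x^{1/β} + δ(x) − N(x) ≤ 1 for all x ≥ μ₁ where δ(x) = o(x^{(1−σ)/β}) with σ ∈ (0,1], β > 1, M > 0, then log ∏_{j≥1} (1 + μ_n/μ_j) = M^{-1/β} μ_n^{1/β} (ζ_{0,β} + o(1)) as n → ∞, where ζ_{0,β} = ∫₀^∞ dy/(y^{1−1/β}(1+y)). -/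
/-!
With `c = M^(-1/β)` and `γ = 1/β`, the sandwich makes `N(x) - c x^γ` equal to
`δ(x) + O(1)`, hence `o(x^γ)`; in particular `N(x) → ∞`, so every `{n | μ n ≤ x}` is finite
and `μ n → ∞`.
Since `log (1 + t/y) = ∫_y^∞ t/(x(x+t)) dx`, summing over `y = μ_j` gives
`log ∏ (1 + t/μ_j) = ∫_0^∞ N(x) t/(x(x+t)) dx`. The substitution `x = t y` turns the main
term `∫ c x^γ t/(x(x+t)) dx` into `c t^γ ζ_{0,β}`, and an error `g(x) = o(x^γ)` with
`|g(x)| ≤ C x^γ` contributes `o(t^γ)`: split at a point `X` beyond which `|g(x)| ≤ ε x^γ`;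
the part below `X` is bounded independently of `t`. Put `t = μ_n`.
-/

open Filter Asymptotics MeasureTheory Set Topology Real

lemma isBigO_rpow_rpow_atTop {τ γ : ℝ} (h : τ ≤ γ) :
    (fun x : ℝ => x ^ τ) =O[atTop] (· ^ γ) :=
  IsBigO.of_bound 1 <| (eventually_ge_atTop 1).mono fun x hx => by
    have hx0 : 0 ≤ x := zero_le_one.trans hx
    rw [one_mul, norm_of_nonneg (rpow_nonneg hx0 τ), norm_of_nonneg (rpow_nonneg hx0 γ)]
    exact rpow_le_rpow_of_exponent_le hx h

lemma isLittleO_sub_rpow_of_sandwich {N δ : ℝ → ℝ} {a c γ : ℝ} (hγ : 0 < γ)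
    (hδ : δ =o[atTop] (· ^ γ))
    (h : ∀ x ≥ a, 0 ≤ c * x ^ γ + δ x - N x ∧ c * x ^ γ + δ x - N x ≤ 1) :
    (fun x => N x - c * x ^ γ) =o[atTop] (· ^ γ) := by
  have hbdd : (fun x => N x - c * x ^ γ - δ x) =O[atTop] fun _ => (1 : ℝ) :=
    IsBigO.of_bound 1 <| (eventually_ge_atTop a).mono fun x hx => by
      obtain ⟨h₁, h₂⟩ := h x hx
      rw [norm_eq_abs, norm_one, one_mul, abs_le]
      constructor <;> linarith
  have hone : (fun _ => (1 : ℝ)) =o[atTop] (· ^ γ) :=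
    (isLittleO_one_left_iff ℝ).2 (tendsto_norm_atTop_atTop.comp (tendsto_rpow_atTop hγ))
  simpa using hδ.add (hbdd.trans_isLittleO hone)

-- "kernel" is `t / (x * (x + t))`, the derivative of `log x - log (x + t)`.
section Kernel

variable {t : ℝ}

lemma hasDerivAt_log_sub_log_add {x : ℝ} (ht : 0 < t) (hx : 0 < x) :
    HasDerivAt (fun x => log x - log (x + t)) (t / (x * (x + t))) x := by
  have hxt : x + t ≠ 0 := by positivity
  refine ((hasDerivAt_log hx.ne').sub (hasDerivAt_log hxt).comp_add_const).congr_deriv ?_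
  rw [inv_sub_inv hx.ne' hxt]
  ring

lemma tendsto_log_sub_log_add_atTop (t : ℝ) :
    Tendsto (fun x => log x - log (x + t)) atTop (𝓝 0) := by
  have hlim : Tendsto (fun x : ℝ => -log (1 + t / x)) atTop (𝓝 0) := by
    have hinner : Tendsto (fun x : ℝ => 1 + t / x) atTop (𝓝 1) := by
      simpa using tendsto_const_nhds.add ((tendsto_const_nhds (x := t)).div_atTop tendsto_id)
    simpa using ((continuousAt_log one_ne_zero).tendsto.comp hinner).neg
  refine hlim.congr' ?_
  filter_upwards [eventually_gt_atTop 0, eventually_gt_atTop (-t)] with x hx hxt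
  rw [one_add_div hx.ne', log_div (by linarith) hx.ne']
  ring

lemma integrableOn_Ioi_kernel {y : ℝ} (ht : 0 < t) (hy : 0 < y) :
    IntegrableOn (fun x => t / (x * (x + t))) (Ioi y) :=
  integrableOn_Ioi_deriv_of_nonneg' (fun x hx => hasDerivAt_log_sub_log_add ht (hy.trans_le hx))
    (fun x (hx : y < x) => by have := hy.trans hx; positivity) (tendsto_log_sub_log_add_atTop t)

lemma integral_Ioi_kernel {y : ℝ} (ht : 0 < t) (hy : 0 < y) :
    ∫ x in Ioi y, t / (x * (x + t)) = log (1 + t / y) := by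
  rw [integral_Ioi_of_hasDerivAt_of_nonneg'
    (fun x hx => hasDerivAt_log_sub_log_add ht (hy.trans_le hx))
    (fun x (hx : y < x) => by have := hy.trans hx; positivity) (tendsto_log_sub_log_add_atTop t),
    one_add_div hy.ne', log_div (by positivity) hy.ne']
  ring

lemma rpow_mul_kernel_le_rpow_sub_one {γ x : ℝ} (ht : 0 ≤ t) (hx : 0 < x) :
    x ^ γ * (t / (x * (x + t))) ≤ x ^ (γ - 1) := by
  rw [rpow_sub_one hx.ne', div_eq_mul_one_div (x ^ γ)]
  refine mul_le_mul_of_nonneg_left ?_ (by positivity)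
  rw [div_le_div_iff₀ (by positivity) hx]
  nlinarith

lemma rpow_mul_kernel_le_mul_rpow_sub_two {γ x : ℝ} (ht : 0 ≤ t) (hx : 0 < x) :
    x ^ γ * (t / (x * (x + t))) ≤ t * x ^ (γ - 2) := by
  rw [show γ - 2 = γ - 1 - 1 by ring, rpow_sub_one hx.ne', rpow_sub_one hx.ne']
  calc x ^ γ * (t / (x * (x + t))) ≤ x ^ γ * (t / (x * x)) := by gcongr; linarith
    _ = t * (x ^ γ / x / x) := by ring

lemma integrableOn_Ioi_rpow_mul_kernel {γ : ℝ} (hγ0 : 0 < γ) (hγ1 : γ < 1) (ht : 0 < t) :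
    IntegrableOn (fun x => x ^ γ * (t / (x * (x + t)))) (Ioi 0) := by
  have hmeas : AEStronglyMeasurable (fun x : ℝ => x ^ γ * (t / (x * (x + t)))) := by fun_prop
  rw [← Ioc_union_Ioi_eq_Ioi zero_le_one]
  refine IntegrableOn.union ?_ ?_
  · refine Integrable.mono' (g := fun x => x ^ (γ - 1)) ?_ hmeas.restrict ?_
    · rw [← IntegrableOn, integrableOn_Ioc_iff_integrableOn_Ioo]
      exact (intervalIntegral.integrableOn_Ioo_rpow_iff zero_lt_one).2 (by linarith)
    · filter_upwards [ae_restrict_mem measurableSet_Ioc] with x hx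
      have hx0 : 0 < x := hx.1
      rw [norm_of_nonneg (by positivity)]
      exact rpow_mul_kernel_le_rpow_sub_one ht.le hx0
  · refine Integrable.mono' (g := fun x => t * x ^ (γ - 2)) ?_ hmeas.restrict ?_
    · exact (integrableOn_Ioi_rpow_of_lt (by linarith) zero_lt_one).const_mul t
    · filter_upwards [ae_restrict_mem measurableSet_Ioi] with x (hx : 1 < x)
      have hx0 : 0 < x := one_pos.trans hx
      rw [norm_of_nonneg (by positivity)]
      exact rpow_mul_kernel_le_mul_rpow_sub_two ht.le hx0

lemma integral_Ioi_rpow_mul_kernel (γ : ℝ) (ht : 0 < t) :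
    ∫ x in Ioi 0, x ^ γ * (t / (x * (x + t))) =
      t ^ γ * ∫ y in Ioi (0 : ℝ), 1 / (y ^ (1 - γ) * (1 + y)) := by
  have hscale := integral_comp_mul_left_Ioi (fun x => x ^ γ * (t / (x * (x + t)))) 0 ht
  rw [mul_zero, smul_eq_mul] at hscale
  rw [← mul_inv_cancel_left₀ ht.ne' (∫ x in Ioi 0, _), ← hscale, ← integral_const_mul,
    ← integral_const_mul]
  refine setIntegral_congr_fun measurableSet_Ioi fun y (hy : 0 < y) => ?_
  rw [mul_rpow ht.le hy.le, rpow_sub hy, rpow_one]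
  field_simp
  ring

end Kernel

section Abelian

variable {g : ℝ → ℝ} {γ : ℝ}

lemma abs_integral_mul_kernel_le {C ε X t : ℝ} (hγ0 : 0 < γ) (hγ1 : γ < 1) (ht : 0 < t)
    (hC : 0 ≤ C) (hε : 0 ≤ ε) (hnear : ∀ x ∈ Ioc 0 X, |g x| ≤ C * x ^ γ)
    (hfar : ∀ x, X < x → |g x| ≤ ε * x ^ γ) :
    |∫ x in Ioi 0, g x * (t / (x * (x + t)))| ≤
      C * (∫ x in Ioc 0 X, x ^ (γ - 1)) +
        ε * (t ^ γ * ∫ y in Ioi (0 : ℝ), 1 / (y ^ (1 - γ) * (1 + y))) := by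
  have hnearInt : IntegrableOn (fun x => C * (Ioc 0 X).indicator (fun x => x ^ (γ - 1)) x)
      (Ioi 0) :=
    (((intervalIntegral.intervalIntegrable_rpow' (by linarith)).1.integrable_indicator
      measurableSet_Ioc).integrableOn.const_mul C)
  have hfarInt : IntegrableOn (fun x => ε * (x ^ γ * (t / (x * (x + t))))) (Ioi 0) :=
    (integrableOn_Ioi_rpow_mul_kernel hγ0 hγ1 ht).const_mul ε
  have hmaj : ∀ x ∈ Ioi (0 : ℝ), ‖g x * (t / (x * (x + t)))‖ ≤
      C * (Ioc 0 X).indicator (fun x => x ^ (γ - 1)) x + ε * (x ^ γ * (t / (x * (x + t)))) := by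
    intro x (hx : 0 < x)
    have hk : 0 ≤ t / (x * (x + t)) := by positivity
    rw [norm_mul, norm_of_nonneg hk, norm_eq_abs]
    by_cases hxX : x ≤ X
    · rw [indicator_of_mem (show x ∈ Ioc 0 X from ⟨hx, hxX⟩)]
      calc |g x| * (t / (x * (x + t))) ≤ C * (x ^ γ * (t / (x * (x + t)))) := by
            rw [← mul_assoc]; exact mul_le_mul_of_nonneg_right (hnear x ⟨hx, hxX⟩) hk
        _ ≤ C * x ^ (γ - 1) :=
          mul_le_mul_of_nonneg_left (rpow_mul_kernel_le_rpow_sub_one ht.le hx) hC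
        _ ≤ _ := le_add_of_nonneg_right (by positivity)
    · rw [indicator_of_notMem fun h => hxX h.2, mul_zero, zero_add, ← mul_assoc]
      exact mul_le_mul_of_nonneg_right (hfar x (not_le.1 hxX)) hk
  calc |∫ x in Ioi 0, g x * (t / (x * (x + t)))|
      ≤ ∫ x in Ioi 0, (C * (Ioc 0 X).indicator (fun x => x ^ (γ - 1)) x +
          ε * (x ^ γ * (t / (x * (x + t))))) :=
        norm_integral_le_of_norm_le (hnearInt.add hfarInt)
          ((ae_restrict_iff' measurableSet_Ioi).2 (.of_forall hmaj))
    _ = _ := by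
      rw [integral_add hnearInt hfarInt, integral_const_mul, integral_const_mul,
        integral_indicator measurableSet_Ioc, Measure.restrict_restrict measurableSet_Ioc,
        inter_eq_left.2 Ioc_subset_Ioi_self, integral_Ioi_rpow_mul_kernel γ ht]

theorem isLittleO_integral_mul_kernel {C : ℝ} (hγ0 : 0 < γ) (hγ1 : γ < 1)
    (hbound : ∀ x > 0, |g x| ≤ C * x ^ γ) (hg : g =o[atTop] (· ^ γ)) :
    (fun t => ∫ x in Ioi 0, g x * (t / (x * (x + t)))) =o[atTop] (· ^ γ) := by
  set Z := ∫ y in Ioi (0 : ℝ), 1 / (y ^ (1 - γ) * (1 + y))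
  have hZ : 0 ≤ Z := setIntegral_nonneg measurableSet_Ioi fun y (hy : 0 < y) => by positivity
  have hC : 0 ≤ C := by simpa using (abs_nonneg _).trans (hbound 1 one_pos)
  refine isLittleO_iff.2 fun ε hε => ?_
  set ε' := ε / (2 * (Z + 1))
  have hε'Z : ε' * Z ≤ ε / 2 := by
    rw [div_mul_eq_mul_div, div_le_iff₀ (by positivity)]
    nlinarith
  obtain ⟨X, hX⟩ := eventually_atTop.1
    ((hg.bound (by positivity : 0 < ε')).and (eventually_gt_atTop 0))
  have hfar : ∀ x, X < x → |g x| ≤ ε' * x ^ γ := fun x hx => by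
    obtain ⟨hgx, hx0⟩ := hX x hx.le
    rwa [norm_eq_abs, norm_of_nonneg (by positivity)] at hgx
  set K := ∫ x in Ioc 0 X, x ^ (γ - 1)
  filter_upwards [eventually_gt_atTop 0,
    (tendsto_rpow_atTop hγ0).eventually_ge_atTop (2 * C * K / ε)] with t ht htK
  rw [div_le_iff₀ hε] at htK
  rw [norm_eq_abs, norm_of_nonneg (by positivity)]
  calc |∫ x in Ioi 0, g x * (t / (x * (x + t)))| ≤ C * K + ε' * (t ^ γ * Z) :=
        abs_integral_mul_kernel_le hγ0 hγ1 ht hC (by positivity)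
          (fun x hx => hbound x hx.1) hfar
    _ ≤ ε * t ^ γ := by nlinarith [rpow_pos_of_pos ht γ]

lemma integrableOn_Ioi_mul_kernel {C t : ℝ} (hγ0 : 0 < γ) (hγ1 : γ < 1) (ht : 0 < t)
    (hg : AEStronglyMeasurable g (volume.restrict (Ioi 0)))
    (hbound : ∀ x > 0, |g x| ≤ C * x ^ γ) :
    IntegrableOn (fun x => g x * (t / (x * (x + t)))) (Ioi 0) := by
  refine ((integrableOn_Ioi_rpow_mul_kernel hγ0 hγ1 ht).const_mul C).mono'
    (hg.mul (by fun_prop : Measurable fun x : ℝ => t / (x * (x + t))).aestronglyMeasurable)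
    ((ae_restrict_iff' measurableSet_Ioi).2 (.of_forall fun x hx => ?_))
  have hk : 0 ≤ t / (x * (x + t)) := by have : (0 : ℝ) < x := hx; positivity
  rw [norm_mul, norm_of_nonneg hk, norm_eq_abs, ← mul_assoc]
  exact mul_le_mul_of_nonneg_right (hbound x hx) hk

end Abelian

section Counting

noncomputable def countingFn (μ : ℕ → ℝ) (x : ℝ) : ℝ := Nat.card {n | μ n ≤ x}

variable {μ : ℕ → ℝ}

lemma countingFn_nonneg (x : ℝ) : 0 ≤ countingFn μ x := Nat.cast_nonneg _

lemma countingFn_mono (hfin : ∀ x, {n | μ n ≤ x}.Finite) : Monotone (countingFn μ) :=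
  fun x y hxy => by
    unfold countingFn
    exact_mod_cast Nat.card_mono (hfin y) fun n (hn : μ n ≤ x) => hn.trans hxy

lemma countingFn_eq_zero_of_lt (hμ : Monotone μ) {x : ℝ} (hx : x < μ 0) :
    countingFn μ x = 0 := by
  have hempty : {n | μ n ≤ x} = ∅ :=
    eq_empty_of_forall_notMem fun n (hn : μ n ≤ x) => (hx.trans_le (hμ n.zero_le)).not_ge hn
  simp [countingFn, hempty]

lemma natCast_add_one_le_countingFn (hμ : Monotone μ) (hfin : ∀ x, {n | μ n ≤ x}.Finite)
    (j : ℕ) : (j : ℝ) + 1 ≤ countingFn μ (μ j) := by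
  have hcard :=
    Nat.card_mono (hfin (μ j)) (show Iic j ⊆ {n | μ n ≤ μ j} from fun _ hn => hμ hn)
  have hlt : j < {n | μ n ≤ μ j}.ncard := by simpa using hcard
  unfold countingFn
  exact_mod_cast Nat.succ_le_of_lt hlt

lemma finite_setOf_le_of_tendsto_countingFn (h : Tendsto (countingFn μ) atTop atTop) (x : ℝ) :
    {n | μ n ≤ x}.Finite := by
  obtain ⟨y, hy, hxy⟩ := ((h.eventually_gt_atTop 0).and (eventually_ge_atTop x)).exists
  have hcard : {n | μ n ≤ y}.ncard ≠ 0 := by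
    unfold countingFn at hy
    exact_mod_cast hy.ne'
  exact (finite_of_ncard_ne_zero hcard).subset fun _ hn => le_trans hn hxy

lemma tendsto_atTop_of_finite_setOf_le (h : ∀ x, {n | μ n ≤ x}.Finite) :
    Tendsto μ atTop atTop := by
  rw [← Nat.cofinite_eq_atTop, tendsto_atTop]
  exact fun x => eventually_cofinite.2 <| (h x).subset fun _ hn => (not_le.1 hn).le

lemma exists_countingFn_le_mul_rpow {γ : ℝ} (hμ : Monotone μ) (hμ0 : 0 < μ 0)
    (hfin : ∀ x, {n | μ n ≤ x}.Finite) (hγ : 0 ≤ γ)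
    (hO : countingFn μ =O[atTop] (· ^ γ)) :
    ∃ C, ∀ x > 0, countingFn μ x ≤ C * x ^ γ := by
  obtain ⟨C₁, X, hX⟩ : ∃ C₁ X, ∀ x ≥ X, countingFn μ x ≤ C₁ * x ^ γ := by
    obtain ⟨C₁, hC₁⟩ := hO.bound
    obtain ⟨X, hX⟩ := eventually_atTop.1 (hC₁.and (eventually_ge_atTop 0))
    refine ⟨C₁, X, fun x hx => ?_⟩
    obtain ⟨hNx, hx0⟩ := hX x hx
    rwa [norm_of_nonneg (countingFn_nonneg x), norm_of_nonneg (by positivity)] at hNx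
  set C₂ := countingFn μ X / μ 0 ^ γ
  have hC₂ : 0 ≤ C₂ := div_nonneg (countingFn_nonneg X) (by positivity)
  refine ⟨max C₁ C₂, fun x hx => ?_⟩
  rcases lt_or_ge x (μ 0) with hxμ | hxμ
  · rw [countingFn_eq_zero_of_lt hμ hxμ]
    exact mul_nonneg (hC₂.trans (le_max_right _ _)) (by positivity)
  rcases le_total X x with hXx | hxX
  · exact (hX x hXx).trans (mul_le_mul_of_nonneg_right (le_max_left _ _) (by positivity))
  · calc countingFn μ x ≤ countingFn μ X := countingFn_mono hfin hxX
      _ = C₂ * μ 0 ^ γ := (div_mul_cancel₀ _ (by positivity)).symm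
      _ ≤ max C₁ C₂ * x ^ γ :=
        mul_le_mul (le_max_right _ _) (rpow_le_rpow hμ0.le hxμ hγ) (by positivity)
          (hC₂.trans (le_max_right _ _))

lemma summable_inv_of_natCast_add_one_le {C γ : ℝ} (hμ : ∀ j, 0 < μ j) (hγ0 : 0 < γ)
    (hγ1 : γ < 1) (h : ∀ j : ℕ, (j : ℝ) + 1 ≤ C * μ j ^ γ) :
    Summable fun j => (μ j)⁻¹ := by
  have hC : 0 < C := by
    have h0 := h 0
    have := rpow_pos_of_pos (hμ 0) γ
    norm_num at h0
    nlinarith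
  have hp : 1 < γ⁻¹ := (one_lt_inv₀ hγ0).2 hγ1
  refine (((summable_one_div_nat_add_rpow 1 γ⁻¹).2 hp).mul_left (C ^ γ⁻¹)).of_nonneg_of_le
    (fun j => (inv_pos.2 (hμ j)).le) fun j => ?_
  have hj : ((j : ℝ) + 1) ^ γ⁻¹ ≤ C ^ γ⁻¹ * μ j :=
    calc ((j : ℝ) + 1) ^ γ⁻¹ ≤ (C * μ j ^ γ) ^ γ⁻¹ :=
          rpow_le_rpow (by positivity) (h j) (by positivity)
      _ = C ^ γ⁻¹ * μ j := by
        rw [mul_rpow hC.le (rpow_pos_of_pos (hμ j) γ).le, ← rpow_mul (hμ j).le,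
          mul_inv_cancel₀ hγ0.ne', rpow_one]
  rw [abs_of_pos (by positivity), mul_one_div, inv_eq_one_div,
    div_le_div_iff₀ (hμ j) (by positivity), one_mul]
  exact hj

lemma tsum_log_one_add_div_eq_integral (hμ : ∀ j, 0 < μ j)
    (hfin : ∀ x, {n | μ n ≤ x}.Finite)
    {t : ℝ} (ht : 0 < t) (hsum : Summable fun j => log (1 + t / μ j)) :
    ∑' j, log (1 + t / μ j) = ∫ x in Ioi 0, countingFn μ x * (t / (x * (x + t))) := by
  set F : ℕ → ℝ → ℝ := fun j => (Ici (μ j)).indicator fun x => t / (x * (x + t))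
  have hrestrict (j : ℕ) :
      (volume.restrict (Ioi 0)).restrict (Ici (μ j)) = volume.restrict (Ici (μ j)) := by
    rw [Measure.restrict_restrict measurableSet_Ici, inter_eq_left.2 (Ici_subset_Ioi.2 (hμ j))]
  have hFint (j : ℕ) : Integrable (F j) (volume.restrict (Ioi 0)) := by
    rw [integrable_indicator_iff measurableSet_Ici, IntegrableOn, hrestrict, ← IntegrableOn,
      integrableOn_Ici_iff_integrableOn_Ioi]
    exact integrableOn_Ioi_kernel ht (hμ j)
  have hFval (j : ℕ) : ∫ x in Ioi 0, F j x = log (1 + t / μ j) := by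
    rw [integral_indicator measurableSet_Ici, hrestrict, integral_Ici_eq_integral_Ioi,
      integral_Ioi_kernel ht (hμ j)]
  have hFnorm (j : ℕ) : ∫ x in Ioi 0, ‖F j x‖ = log (1 + t / μ j) := by
    rw [← hFval j]
    congr with x
    refine norm_of_nonneg (indicator_nonneg (fun x (hx : μ j ≤ x) => ?_) x)
    have := (hμ j).trans_le hx
    positivity
  have hFsum (x : ℝ) : ∑' j, F j x = countingFn μ x * (t / (x * (x + t))) := by
    rw [tsum_eq_sum (s := (hfin x).toFinset) fun j hj => indicator_of_notMem (by simpa using hj) _,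
      Finset.sum_congr rfl fun j hj => indicator_of_mem (by simpa using hj) _, Finset.sum_const,
      nsmul_eq_mul, countingFn, Nat.card_coe_set_eq, ncard_eq_toFinset_card _ (hfin x)]
  calc ∑' j, log (1 + t / μ j) = ∑' j, ∫ x in Ioi 0, F j x :=
        tsum_congr fun j => (hFval j).symm
    _ = ∫ x in Ioi 0, ∑' j, F j x :=
      integral_tsum_of_summable_integral_norm hFint (by simpa only [hFnorm] using hsum)
    _ = _ := by simp only [hFsum]

lemma log_tprod_one_add_div_sub_eq_integral {c C γ t : ℝ} (hμ : ∀ j, 0 < μ j)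
    (hfin : ∀ x, {n | μ n ≤ x}.Finite) (hsum : Summable fun j => (μ j)⁻¹)
    (hC : ∀ x > 0, countingFn μ x ≤ C * x ^ γ) (hγ0 : 0 < γ) (hγ1 : γ < 1) (ht : 0 < t) :
    log (∏' j, (1 + t / μ j)) -
        c * t ^ γ * ∫ y in Ioi (0 : ℝ), 1 / (y ^ (1 - γ) * (1 + y)) =
      ∫ x in Ioi 0, (countingFn μ x - c * x ^ γ) * (t / (x * (x + t))) := by
  have hsumlog : Summable fun j => log (1 + t / μ j) := by
    simpa only [div_eq_mul_inv] using Real.summable_log_one_add_of_summable (hsum.mul_left t)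
  have hNint := integrableOn_Ioi_mul_kernel hγ0 hγ1 ht
    (countingFn_mono hfin).measurable.aestronglyMeasurable
    fun x hx => (abs_of_nonneg (countingFn_nonneg x)).trans_le (hC x hx)
  rw [← rexp_tsum_eq_tprod (fun j => by have := hμ j; positivity) hsumlog, log_exp,
    tsum_log_one_add_div_eq_integral hμ hfin ht hsumlog, mul_assoc,
    ← integral_Ioi_rpow_mul_kernel γ ht, ← integral_const_mul,
    ← integral_sub hNint ((integrableOn_Ioi_rpow_mul_kernel hγ0 hγ1 ht).const_mul c)]
  congr with x
  ring

end Counting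

theorem log_product_asymptotics
    (μ : ℕ → ℝ) (hpos : ∀ n, 0 < μ n) (hmono : StrictMono μ)
    (M β σ : ℝ) (hM : 0 < M) (hβ : 1 < β) (hσ : σ ∈ Set.Ioc (0 : ℝ) 1)
    (Ncount : ℝ → ℝ) (hNcount : ∀ x : ℝ, Ncount x = (Nat.card {n : ℕ | μ n ≤ x} : ℝ))
    (δ : ℝ → ℝ) (hδ : δ =o[atTop] fun x : ℝ => x ^ ((1 - σ) / β))
    (hsandwich : ∀ x : ℝ, μ 0 ≤ x →
      0 ≤ M ^ (-(1 / β)) * x ^ (1 / β) + δ x - Ncount x ∧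
      M ^ (-(1 / β)) * x ^ (1 / β) + δ x - Ncount x ≤ 1) :
    (fun n : ℕ => Real.log (∏' j : ℕ, (1 + μ n / μ j)) -
        M ^ (-(1 / β)) * (μ n) ^ (1 / β) *
          ∫ y in Set.Ioi (0 : ℝ), 1 / (y ^ (1 - 1 / β) * (1 + y)))
      =o[atTop] fun n : ℕ => (μ n) ^ (1 / β) := by
  obtain rfl : Ncount = countingFn μ := funext hNcount
  set c := M ^ (-(1 / β))
  set γ := 1 / β
  have hγ0 : 0 < γ := by positivity
  have hγ1 : γ < 1 := (div_lt_one (by positivity)).2 hβ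
  have hc : 0 < c := rpow_pos_of_pos hM _
  have hδγ : δ =o[atTop] (· ^ γ) :=
    hδ.trans_isBigO (isBigO_rpow_rpow_atTop (div_le_div_of_nonneg_right (by linarith [hσ.1])
      (by positivity)))
  have herr := isLittleO_sub_rpow_of_sandwich hγ0 hδγ hsandwich
  have hequiv : countingFn μ ~[atTop] fun x => c * x ^ γ :=
    herr.trans_isBigO (isBigO_self_const_mul hc.ne' _ _)
  have hfin := finite_setOf_le_of_tendsto_countingFn
    (hequiv.symm.tendsto_atTop ((tendsto_rpow_atTop hγ0).const_mul_atTop hc))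
  obtain ⟨C, hC⟩ := exists_countingFn_le_mul_rpow hmono.monotone (hpos 0) hfin hγ0.le
    (hequiv.isBigO.trans (isBigO_const_mul_self c _ _))
  have hbound : ∀ x > 0, |countingFn μ x - c * x ^ γ| ≤ (C + c) * x ^ γ := fun x hx => by
    have := countingFn_nonneg (μ := μ) x
    have := rpow_pos_of_pos hx γ
    rw [abs_le]
    constructor <;> nlinarith [hC x hx]
  have hsum : Summable fun j => (μ j)⁻¹ := summable_inv_of_natCast_add_one_le hpos hγ0 hγ1
    fun j => (natCast_add_one_le_countingFn hmono.monotone hfin j).trans (hC _ (hpos j))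
  refine ((isLittleO_integral_mul_kernel hγ0 hγ1 hbound herr).comp_tendsto
    (tendsto_atTop_of_finite_setOf_le hfin)).congr' (.of_forall fun n => ?_) .rfl
  exact (log_tprod_one_add_div_sub_eq_integral hpos hfin hsum hC hγ0 hγ1 (hpos n)).symm
end

section
/- For distinct positive reals μ₁ < μ₂ < ⋯ (infinitely many) with ∑ 1/μ_n < ∞, the closed linear span in L²[0,∞) of the functions {e^{-μ_n t}}_{n≥1} is a proper closed subspace of L²[0,∞); equivalently, there exists a nonzero g ∈ L²[0,∞) with ∫₀^∞ e^{-μ_n t} g(t) dt = 0 for all n. -/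
/-!
Write `e_a(t) = exp (-a t)`, so that `⟪e_a, e_b⟫ = 1 / (a + b)` in `L²[0, ∞)`, and fix
`l = μ₀ / 2`. For a finite set `S` of the `μ_n`, Lagrange interpolation at the poles gives a
combination `φ = c e_l + ∑_{a ∈ S} c_a e_a` whose Laplace transform is
`⟪φ, e_x⟫ = ∏_{a ∈ S} (x - a) / ((x + l) ∏_{a ∈ S} (x + a))`. It vanishes at every `a ∈ S`, so
`e_l - φ / c` is the projection of `e_l` onto the span of the `e_a`, and the squared distance is
`⟪φ, e_l⟫ / c = (2l)⁻¹ (∏_{a ∈ S} (a - l) / (a + l))² ≥ (2l)⁻¹ exp (-4 l ∑ 1 / μ_n)²`.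
So `e_l` is not in the closed span of the `e_{μ_n}`, whose orthogonal complement is then nonzero.
-/

open MeasureTheory Set Real Finset Polynomial Lagrange
open scoped RealInnerProductSpace

theorem Lagrange.eval_eq_eval_nodal_mul_sum {F ι : Type*} [Field F] [DecidableEq ι]
    {s : Finset ι} {v : ι → F} (hvs : Set.InjOn v s) {p : F[X]} (hp : p.degree < #s) {x : F}
    (hx : ∀ i ∈ s, x ≠ v i) :
    p.eval x = (nodal s v).eval x * ∑ i ∈ s, nodalWeight s v i * (x - v i)⁻¹ * p.eval (v i) := by
  conv_lhs => rw [eq_interpolate hvs hp]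
  exact eval_interpolate_not_at_node _ hx

theorem inner_div_le_norm_sub_sq {E : Type*} [NormedAddCommGroup E] [InnerProductSpace ℝ E]
    {K : Submodule ℝ E} {φ u v : E} {c : ℝ} (hφ : ∀ w ∈ K, ⟪φ, w⟫ = 0)
    (hφu : φ - c • u ∈ K) (hv : v ∈ K) :
    ⟪φ, u⟫ / c ≤ ‖u - v‖ ^ 2 := by
  -- `u - φ / c` is the orthogonal projection of `u` onto `K`, and `⟪φ, u⟫ / c = ‖φ / c‖ ^ 2`.
  rcases eq_or_ne c 0 with rfl | hc
  · simp
  set t := ⟪φ, u⟫ / c with ht_def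
  have hφφ : ⟪φ, φ⟫ = c ^ 2 * t := by
    have h := hφ _ hφu
    rw [inner_sub_right, real_inner_smul_right, sub_eq_zero] at h
    rw [h, ht_def]; field_simp
  have hφuv : ⟪φ, u - v⟫ = c * t := by
    rw [inner_sub_right, hφ v hv, sub_zero, ht_def]; field_simp
  have hc2 : 0 < c ^ 2 := by positivity
  have ht : 0 ≤ t := by
    have := real_inner_self_nonneg (x := φ)
    rw [hφφ] at this
    exact (mul_nonneg_iff_of_pos_left hc2).mp this
  have hCS := real_inner_mul_inner_self_le φ (u - v)
  rw [hφuv, hφφ, real_inner_self_eq_norm_sq] at hCS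
  rcases ht.eq_or_lt with h0 | htpos
  · rw [← h0]; positivity
  · have hct : 0 < c ^ 2 * t := by positivity
    nlinarith

theorem Submodule.exists_finset_mem_span_image {R M ι : Type*} [Semiring R] [AddCommMonoid M]
    [Module R M] {f : ι → M} {v : M} (hv : v ∈ span R (Set.range f)) :
    ∃ T : Finset ι, v ∈ span R (f '' T) := by
  rw [span_range_eq_iSup, mem_iSup_iff_exists_finset] at hv
  obtain ⟨T, hT⟩ := hv
  refine ⟨T, ?_⟩
  rwa [Set.image_eq_iUnion, span_iUnion₂]

theorem Submodule.exists_ne_zero_mem_orthogonal_of_notMem_topologicalClosure {𝕜 E : Type*}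
    [RCLike 𝕜] [NormedAddCommGroup E] [InnerProductSpace 𝕜 E] [CompleteSpace E]
    {K : Submodule 𝕜 E} {u : E} (hu : u ∉ K.topologicalClosure) : ∃ g ∈ Kᗮ, g ≠ 0 := by
  refine (Submodule.ne_bot_iff _).mp (mt K.topologicalClosure_eq_top_iff.mpr fun h => hu ?_)
  rw [h]
  exact Submodule.mem_top

theorem exp_neg_four_mul_le_one_sub_div_one_add {x : ℝ} (hx₀ : 0 ≤ x) (hx : x ≤ 1 / 2) :
    exp (-(4 * x)) ≤ (1 - x) / (1 + x) := by
  rw [exp_neg]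
  calc (exp (4 * x))⁻¹ ≤ (1 + 4 * x)⁻¹ := by
        gcongr
        linarith [add_one_le_exp (4 * x)]
    _ ≤ (1 - x) / (1 + x) := by
        rw [inv_eq_one_div, div_le_div_iff₀ (by positivity) (by positivity)]
        nlinarith

theorem exp_neg_mul_le_prod_sub_div_add {l B : ℝ} (hl : 0 < l) {S : Finset ℝ}
    (hS : ∀ a ∈ S, 2 * l ≤ a) (hB : ∑ a ∈ S, a⁻¹ ≤ B) :
    exp (-(4 * l) * B) ≤ ∏ a ∈ S, (a - l) / (a + l) := by
  have hsum : ∑ a ∈ S, -(4 * (l / a)) = -(4 * l) * ∑ a ∈ S, a⁻¹ := by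
    rw [mul_sum]
    exact sum_congr rfl fun a _ => by ring
  calc exp (-(4 * l) * B) ≤ exp (∑ a ∈ S, -(4 * (l / a))) := by
        rw [hsum]
        exact exp_le_exp.mpr (mul_le_mul_of_nonpos_left hB (by linarith))
    _ = ∏ a ∈ S, exp (-(4 * (l / a))) := exp_sum _ _
    _ ≤ ∏ a ∈ S, (a - l) / (a + l) := by
        refine prod_le_prod (fun _ _ => (exp_pos _).le) fun a ha => ?_
        have ha₀ : 0 < a := by linarith [hS a ha]
        have h := exp_neg_four_mul_le_one_sub_div_one_add (div_nonneg hl.le ha₀.le)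
          (by rw [div_le_iff₀ ha₀]; linarith [hS a ha])
        rwa [one_sub_div ha₀.ne', one_add_div ha₀.ne', div_div_div_cancel_right₀ ha₀.ne'] at h

local notation "L²₊" => Lp ℝ 2 (volume.restrict (Ici (0 : ℝ)))

theorem memLp_exp_neg_mul {a : ℝ} (ha : 0 < a) :
    MemLp (fun t => exp (-a * t)) 2 (volume.restrict (Ici (0 : ℝ))) := by
  rw [memLp_two_iff_integrable_sq (by fun_prop)]
  have h : (fun t => exp (-a * t) ^ 2) = fun t => exp (-(2 * a) * t) := by
    ext t; rw [← exp_nat_mul]; ring_nf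
  rw [h, ← IntegrableOn, integrableOn_Ici_iff_integrableOn_Ioi]
  exact exp_neg_integrableOn_Ioi 0 (by positivity)

-- junk value `0` for `a ≤ 0`
noncomputable def expNegMulL2 (a : ℝ) : L²₊ :=
  if h : 0 < a then (memLp_exp_neg_mul h).toLp _ else 0

theorem coeFn_expNegMulL2 {a : ℝ} (ha : 0 < a) :
    expNegMulL2 a =ᵐ[volume.restrict (Ici (0 : ℝ))] fun t => exp (-a * t) := by
  rw [expNegMulL2, dif_pos ha]
  exact (memLp_exp_neg_mul ha).coeFn_toLp

theorem inner_expNegMulL2_left {a : ℝ} (ha : 0 < a) (f : L²₊) :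
    ⟪expNegMulL2 a, f⟫ = ∫ t in Ici (0 : ℝ), exp (-a * t) * f t := by
  rw [L2.inner_def]
  refine integral_congr_ae ?_
  filter_upwards [coeFn_expNegMulL2 ha] with t ht
  simp [ht, mul_comm]

theorem inner_expNegMulL2_expNegMulL2 {a b : ℝ} (ha : 0 < a) (hb : 0 < b) :
    ⟪expNegMulL2 a, expNegMulL2 b⟫ = (a + b)⁻¹ := by
  rw [inner_expNegMulL2_left ha]
  have h : ∫ t in Ici (0 : ℝ), exp (-a * t) * expNegMulL2 b t
      = ∫ t in Ici (0 : ℝ), exp (-(a + b) * t) := by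
    refine integral_congr_ae ?_
    filter_upwards [coeFn_expNegMulL2 hb] with t ht
    rw [ht, ← exp_add]; ring_nf
  rw [h, integral_Ici_eq_integral_Ioi, integral_exp_mul_Ioi (by linarith), mul_zero, exp_zero,
    neg_div_neg_eq, one_div]

-- The Laplace transform `x ↦ ⟪φ, e_x⟫` of this combination is the partial fraction expansion of
-- `p(x) / ∏_{a ∈ s} (x + a)`, the poles `-a` being the Lagrange nodes.
noncomputable def expPartialFraction (s : Finset ℝ) (p : ℝ[X]) : L²₊ :=
  ∑ a ∈ s, (nodalWeight s Neg.neg a * p.eval (-a)) • expNegMulL2 a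

theorem inner_expPartialFraction_expNegMulL2 {s : Finset ℝ} (hs : ∀ a ∈ s, 0 < a) {p : ℝ[X]}
    (hp : p.degree < #s) {x : ℝ} (hx : 0 < x) :
    ⟪expPartialFraction s p, expNegMulL2 x⟫ = p.eval x / ∏ a ∈ s, (x + a) := by
  have hpole : ∀ a ∈ s, x ≠ -a := fun a ha => by linarith [hs a ha]
  have hprod : ∏ a ∈ s, (x + a) ≠ 0 :=
    prod_ne_zero_iff.mpr fun a ha => by linarith [hs a ha]
  rw [eval_eq_eval_nodal_mul_sum neg_injective.injOn hp hpole, eval_nodal]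
  simp only [sub_neg_eq_add]
  rw [mul_div_cancel_left₀ _ hprod, expPartialFraction, sum_inner]
  refine sum_congr rfl fun a ha => ?_
  rw [real_inner_smul_left, inner_expNegMulL2_expNegMulL2 (hs a ha) hx, add_comm a x]
  ring

theorem inner_expPartialFraction_mem_span {S : Finset ℝ} (hS : ∀ a ∈ S, 0 < a) {s : Finset ℝ}
    (hs : ∀ a ∈ s, 0 < a) (hp : (nodal S id).degree < #s) {w : L²₊}
    (hw : w ∈ Submodule.span ℝ (expNegMulL2 '' S)) :
    ⟪expPartialFraction s (nodal S id), w⟫ = 0 := by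
  induction hw using Submodule.span_induction with
  | mem w hw =>
    obtain ⟨a, ha, rfl⟩ := hw
    rw [inner_expPartialFraction_expNegMulL2 hs hp (hS a ha), eval_nodal,
      prod_eq_zero (f := fun b => a - id b) ha (sub_self _), zero_div]
  | zero => exact inner_zero_right _
  | add w w' _ _ hw hw' => rw [inner_add_right, hw, hw', add_zero]
  | smul r w _ hw => rw [real_inner_smul_right, hw, mul_zero]

theorem expPartialFraction_insert_sub_smul_mem_span {l : ℝ} {S : Finset ℝ} (hlS : l ∉ S)
    (p : ℝ[X]) :
    expPartialFraction (insert l S) p - (nodalWeight (insert l S) Neg.neg l * p.eval (-l)) •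
      expNegMulL2 l ∈ Submodule.span ℝ (expNegMulL2 '' S) := by
  rw [expPartialFraction, sum_insert hlS, add_sub_cancel_left]
  exact Submodule.sum_mem _ fun a ha =>
    Submodule.smul_mem _ _ (Submodule.subset_span (mem_image_of_mem _ ha))

theorem prod_sq_div_le_norm_expNegMulL2_sub_sq {l : ℝ} (hl : 0 < l) {S : Finset ℝ}
    (hS : ∀ a ∈ S, 0 < a) {v : L²₊} (hv : v ∈ Submodule.span ℝ (expNegMulL2 '' S)) :
    (∏ a ∈ S, (a - l) / (a + l)) ^ 2 / (2 * l) ≤ ‖expNegMulL2 l - v‖ ^ 2 := by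
  by_cases hlS : l ∈ S
  · rw [prod_eq_zero hlS (by simp), zero_pow two_ne_zero, zero_div]
    positivity
  have hs : ∀ a ∈ insert l S, 0 < a := by simpa [hl] using hS
  have hp : (nodal S id).degree < #(insert l S) := by
    rw [degree_nodal, card_insert_of_notMem hlS]; exact_mod_cast Nat.lt_succ_self _
  refine le_of_eq_of_le ?_ (inner_div_le_norm_sub_sq
    (fun _ => inner_expPartialFraction_mem_span hS hs hp)
    (expPartialFraction_insert_sub_smul_mem_span hlS _) hv)
  rw [inner_expPartialFraction_expNegMulL2 hs hp hl, eval_nodal, prod_insert hlS]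
  have hc : nodalWeight (insert l S) Neg.neg l * (nodal S id).eval (-l) =
      ∏ a ∈ S, (-l - a) / (a - l) := by
    rw [nodalWeight, erase_insert hlS, eval_nodal, ← prod_mul_distrib]
    refine prod_congr rfl fun a _ => ?_
    rw [id, div_eq_mul_inv, mul_comm, neg_sub_neg]
  calc (∏ a ∈ S, (a - l) / (a + l)) ^ 2 / (2 * l)
      = (∏ a ∈ S, (l - a) / (l + a) / ((-l - a) / (a - l))) / (2 * l) := by
        rw [← Finset.prod_pow]
        congr 1
        refine prod_congr rfl fun a ha => ?_
        have ha₀ := hS a ha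
        have hla : l + a ≠ 0 := by linarith
        have hla' : -l - a ≠ 0 := by linarith
        rw [div_div_div_eq, div_pow, div_eq_div_iff (by positivity) (mul_ne_zero hla hla')]
        ring
    _ = _ := by
        rw [hc, prod_div_distrib, prod_div_distrib]
        simp only [id]
        ring

theorem le_norm_expNegMulL2_sub_sq_of_mem_span {l : ℝ} (hl : 0 < l) {μ : ℕ → ℝ}
    (hμ : Function.Injective μ) (hμl : ∀ n, 2 * l ≤ μ n) (hsum : Summable fun n => 1 / μ n)
    {v : L²₊} (hv : v ∈ Submodule.span ℝ (Set.range fun n => expNegMulL2 (μ n))) :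
    exp (-(4 * l) * ∑' n, 1 / μ n) ^ 2 / (2 * l) ≤ ‖expNegMulL2 l - v‖ ^ 2 := by
  have hpos : ∀ n, 0 < μ n := fun n => by linarith [hμl n]
  obtain ⟨T, hT⟩ := Submodule.exists_finset_mem_span_image hv
  have hT' : v ∈ Submodule.span ℝ (expNegMulL2 '' ↑(T.image μ)) := by
    rwa [coe_image, ← Set.image_comp]
  have hB : ∑ a ∈ T.image μ, a⁻¹ ≤ ∑' n, 1 / μ n := by
    rw [sum_image hμ.injOn]
    simpa only [one_div] using hsum.sum_le_tsum T fun n _ => (one_div_pos.mpr (hpos n)).le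
  calc _ ≤ (∏ a ∈ T.image μ, (a - l) / (a + l)) ^ 2 / (2 * l) := by
        gcongr
        exact exp_neg_mul_le_prod_sub_div_add hl (by simpa using fun n _ => hμl n) hB
    _ ≤ ‖expNegMulL2 l - v‖ ^ 2 :=
        prod_sq_div_le_norm_expNegMulL2_sub_sq hl (by simpa using fun n _ => hpos n) hT'

theorem expNegMulL2_notMem_topologicalClosure_span {l : ℝ} (hl : 0 < l) {μ : ℕ → ℝ}
    (hμ : Function.Injective μ) (hμl : ∀ n, 2 * l ≤ μ n) (hsum : Summable fun n => 1 / μ n) :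
    expNegMulL2 l ∉
      (Submodule.span ℝ (Set.range fun n => expNegMulL2 (μ n))).topologicalClosure := by
  rw [← SetLike.mem_coe, Submodule.topologicalClosure_coe]
  intro hmem
  have h := closure_minimal
    (t := {w | exp (-(4 * l) * ∑' n, 1 / μ n) ^ 2 / (2 * l) ≤ ‖expNegMulL2 l - w‖ ^ 2})
    (fun _ => le_norm_expNegMulL2_sub_sq_of_mem_span hl hμ hμl hsum)
    (isClosed_le continuous_const (by fun_prop)) hmem
  rw [Set.mem_ofPred_eq, sub_self, norm_zero] at h
  have : 0 < exp (-(4 * l) * ∑' n, 1 / μ n) ^ 2 / (2 * l) := by positivity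
  linarith

theorem muntz_nondense_half_line
    (μ : ℕ → ℝ) (hpos : ∀ n, 0 < μ n) (hmono : StrictMono μ)
    (hsum : Summable fun n => 1 / μ n) :
    ∃ g : Lp ℝ 2 (volume.restrict (Set.Ici (0 : ℝ))), g ≠ 0 ∧
      ∀ n : ℕ, ∫ t in Set.Ici (0 : ℝ), Real.exp (-(μ n) * t) * (g : ℝ → ℝ) t = 0 := by
  have hμl : ∀ n, 2 * (μ 0 / 2) ≤ μ n := fun n => by
    simpa [mul_div_cancel₀] using hmono.monotone (Nat.zero_le n)
  obtain ⟨g, hg, hg0⟩ := Submodule.exists_ne_zero_mem_orthogonal_of_notMem_topologicalClosure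
    (expNegMulL2_notMem_topologicalClosure_span (half_pos (hpos 0)) hmono.injective hμl hsum)
  refine ⟨g, hg0, fun n => ?_⟩
  rw [← inner_expNegMulL2_left (hpos n)]
  exact Submodule.inner_right_of_mem_orthogonal (Submodule.subset_span (Set.mem_range_self n)) hg
end
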